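/- arXiv:1001.4966 — 6 statements merged into one kernel-verified Lean document; each statement's English description precedes it below -/
import Mathlib

section
/- Let (X,μ) be a non-atomic probability measure space, let φ : X → [0,∞) be measurable and integrable, and let I ⊆ X be measurable with μ(I) > 0. Set s = (1/μ(I)) ∫_I φ dμ. Then for every β ∈ (0, μ(I)] there exists a measurable set E_β ⊆ I with μ(E_β) = β such that (1/μ(E_β)) ∫_{E_β} φ dμ = s. -/
/-!
Replacing `φ` by `φ - s` reduces the claim to: if `∫_I ψ = 0`, some `E ⊆ I` with `μ E = β` has
`∫_E ψ = 0`. Non-atomicity (Sierpiński's theorem, then dyadic bisection) yields an increasing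
family `C t ⊆ I`, `t ∈ [0, 1]`, with `μ (C t) = t μ(I)`, and `F t = ∫_{C t} ψ` is continuous with
`F 0 = F 1 = 0`. Read `[0, 1]` as a circle: the arcs from `t` to `t + b` (wrapping around past `1`)
all have measure `β = b μ(I)`, and the increment of `F` along an arc is `≤ 0` when the arc starts
at a maximum point of `F` and `≥ 0` when it ends there. The intermediate value theorem gives an arc
with zero increment.
-/

open MeasureTheory Set Filter ENNReal

/-- A measure is non-atomic if every measurable set of positive measure contains a
measurable subset of strictly smaller positive measure. -/
def Nonatomic {X : Type*} [MeasurableSpace X] (μ : Measure X) : Prop :=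
  ∀ A : Set X, MeasurableSet A → 0 < μ A →
    ∃ B, B ⊆ A ∧ MeasurableSet B ∧ 0 < μ B ∧ μ B < μ A

/-- A tree on a probability measure space, in the sense of Melas. -/
structure TreeOn (X : Type*) [MeasurableSpace X] (μ : MeasureTheory.Measure X) where
  carrier : Set (Set X)
  child : Set X → Set (Set X)
  level : ℕ → Set (Set X)
  univ_mem : Set.univ ∈ carrier
  meas : ∀ I ∈ carrier, MeasurableSet I
  pos : ∀ I ∈ carrier, 0 < μ I
  child_subset_carrier : ∀ I ∈ carrier, child I ⊆ carrier
  child_finite : ∀ I ∈ carrier, (child I).Finite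
  child_two : ∀ I ∈ carrier, ∃ J ∈ child I, ∃ K ∈ child I, J ≠ K
  child_sub : ∀ I ∈ carrier, ∀ J ∈ child I, J ⊆ I
  child_almost_disjoint : ∀ I ∈ carrier, ∀ J ∈ child I, ∀ K ∈ child I, J ≠ K → μ (J ∩ K) = 0
  child_union : ∀ I ∈ carrier, ⋃₀ child I = I
  level_zero : level 0 = {Set.univ}
  level_succ : ∀ m, level (m + 1) = ⋃ I ∈ level m, child I
  carrier_eq : carrier = ⋃ m, level m
  level_tendsto : Filter.Tendsto (fun m => ⨆ I ∈ level m, μ I) Filter.atTop (nhds 0)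

/-- The maximal operator associated to a tree `T`:
`M_T φ (x) = sup { (1/μ I) ∫_I |φ| dμ : x ∈ I, I ∈ T }`. -/
noncomputable def maxT {X : Type*} [MeasurableSpace X] (μ : MeasureTheory.Measure X)
    (T : TreeOn X μ) (φ : X → ℝ) (x : X) : ℝ≥0∞ :=
  ⨆ (I : Set X) (_ : I ∈ T.carrier) (_ : x ∈ I),
    (∫⁻ y in I, ENNReal.ofReal |φ y| ∂μ) / μ I

/-- The norm `|||φ|||_{p,∞} = sup { μ(E)^{-1+1/p} ∫_E |φ| dμ : E measurable, μ E > 0 }`. -/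
noncomputable def tripleNorm {X : Type*} [MeasurableSpace X] (μ : MeasureTheory.Measure X)
    (p : ℝ) (φ : X → ℝ) : ℝ≥0∞ :=
  ⨆ (E : Set X) (_ : MeasurableSet E) (_ : 0 < μ E),
    μ E ^ (-1 + 1/p) * ∫⁻ x in E, ENNReal.ofReal |φ x| ∂μ

/-- The standard quasi-norm `‖φ‖_{p,∞} = sup { λ · μ({|φ| > λ})^{1/p} : λ > 0 }`. -/
noncomputable def weakNorm {X : Type*} [MeasurableSpace X] (μ : MeasureTheory.Measure X)
    (p : ℝ) (φ : X → ℝ) : ℝ≥0∞ :=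
  ⨆ (l : ℝ) (_ : 0 < l), ENNReal.ofReal l * μ {x | l < |φ x|} ^ (1/p)

/-- The standard quasi-norm for an `ℝ≥0∞`-valued function (such as `maxT μ T φ`). -/
noncomputable def weakNormE {X : Type*} [MeasurableSpace X] (μ : MeasureTheory.Measure X)
    (p : ℝ) (g : X → ℝ≥0∞) : ℝ≥0∞ :=
  ⨆ (l : ℝ) (_ : 0 < l), ENNReal.ofReal l * μ {x | ENNReal.ofReal l < g x} ^ (1/p)


open Topology

/-- The greedy step of Sierpiński's theorem: some `i ∈ 𝒮` realizes at least half of the largest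
gain over `g i₀`. -/
theorem exists_mem_add_le_two_mul {ι : Type*} {𝒮 : Set ι} {g : ι → ℝ≥0∞} {i₀ : ι} (hi₀ : i₀ ∈ 𝒮)
    (hσ : ⨆ i ∈ 𝒮, g i ≠ ∞) : ∃ i ∈ 𝒮, ∀ j ∈ 𝒮, g i₀ + g j ≤ 2 * g i := by
  set σ := ⨆ i ∈ 𝒮, g i
  have hle_σ : ∀ j ∈ 𝒮, g j ≤ σ := fun j hj => le_biSup g hj
  rcases le_or_gt σ (g i₀) with hσi₀ | hi₀σ
  · exact ⟨i₀, hi₀, fun j hj => two_mul (g i₀) ▸ add_le_add le_rfl ((hle_σ j hj).trans hσi₀)⟩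
  · have hmid : (g i₀ + σ) / 2 < σ := by
      rw [ENNReal.div_lt_iff (by simp) (by simp), mul_two]
      exact ENNReal.add_lt_add_right hσ hi₀σ
    obtain ⟨i, hi, hlt⟩ := lt_biSup_iff.1 hmid
    rw [ENNReal.div_lt_iff (by simp) (by simp), mul_comm] at hlt
    exact ⟨i, hi, fun j hj => (add_le_add le_rfl (hle_σ j hj)).trans hlt.le⟩

section Nonatomic

variable {X : Type*} [MeasurableSpace X] {μ : Measure X} {A : Set X}

theorem Nonatomic.exists_subset_pos_two_mul_le (hna : Nonatomic μ) (hA : MeasurableSet A)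
    (hA0 : 0 < μ A) : ∃ B ⊆ A, MeasurableSet B ∧ 0 < μ B ∧ 2 * μ B ≤ μ A := by
  obtain ⟨B, hBA, hB, hB0, hBlt⟩ := hna A hA hA0
  have hsplit : μ B + μ (A \ B) = μ A := by
    rw [← measure_inter_add_sdiff A hB, inter_eq_self_of_subset_right hBA]
  rcases le_total (μ B) (μ (A \ B)) with hle | hle
  · exact ⟨B, hBA, hB, hB0, by rw [two_mul, ← hsplit]; gcongr⟩
  · refine ⟨A \ B, sdiff_subset, hA.diff hB, ?_, by rw [two_mul, ← hsplit, add_comm]; gcongr⟩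
    refine pos_iff_ne_zero.2 fun h0 => hBlt.ne ?_
    rw [← hsplit, h0, add_zero]

variable [IsFiniteMeasure μ]

theorem Nonatomic.exists_subset_pos_lt (hna : Nonatomic μ) (hA : MeasurableSet A)
    (hA0 : 0 < μ A) {ε : ℝ≥0∞} (hε : 0 < ε) :
    ∃ B ⊆ A, MeasurableSet B ∧ 0 < μ B ∧ μ B < ε := by
  have halving : ∀ n : ℕ, ∃ B ⊆ A, MeasurableSet B ∧ 0 < μ B ∧ 2 ^ n * μ B ≤ μ A := by
    intro n
    induction n with
    | zero => exact ⟨A, subset_rfl, hA, hA0, by simp⟩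
    | succ n ih =>
      obtain ⟨B, hBA, hB, hB0, hBn⟩ := ih
      obtain ⟨B', hB'B, hB', hB'0, hB'2⟩ := hna.exists_subset_pos_two_mul_le hB hB0
      refine ⟨B', hB'B.trans hBA, hB', hB'0, ?_⟩
      calc 2 ^ (n + 1) * μ B' = 2 ^ n * (2 * μ B') := by ring
        _ ≤ 2 ^ n * μ B := by gcongr
        _ ≤ μ A := hBn
  obtain ⟨n, hn⟩ := ENNReal.exists_nat_mul_gt hε.ne' (measure_ne_top μ A)
  obtain ⟨B, hBA, hB, hB0, hBn⟩ := halving n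
  refine ⟨B, hBA, hB, hB0, lt_of_not_ge fun hεB => hn.not_ge ?_⟩
  calc (n : ℝ≥0∞) * ε ≤ 2 ^ n * μ B := by
        gcongr
        exact_mod_cast n.lt_two_pow_self.le
    _ ≤ μ A := hBn

theorem Nonatomic.exists_subset_sdiff_pos_measure_union_le (hna : Nonatomic μ)
    (hA : MeasurableSet A) {U : Set X} (hU : MeasurableSet U) {r : ℝ≥0∞} (hUr : μ U < r)
    (hr : r ≤ μ A) : ∃ T ⊆ A \ U, MeasurableSet T ∧ 0 < μ T ∧ μ (U ∪ T) ≤ r := by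
  have hAU : 0 < μ (A \ U) := by
    refine pos_iff_ne_zero.2 fun h0 => (hUr.trans_le hr).not_ge ?_
    rw [← measure_inter_add_sdiff A hU, h0, add_zero]
    exact measure_mono inter_subset_right
  obtain ⟨T, hTAU, hT, hT0, hTr⟩ := hna.exists_subset_pos_lt (hA.diff hU) hAU (tsub_pos_of_lt hUr)
  refine ⟨T, hTAU, hT, hT0, ?_⟩
  calc μ (U ∪ T) ≤ μ U + (r - μ U) := (measure_union_le _ _).trans (add_le_add le_rfl hTr.le)
    _ = r := add_tsub_cancel_of_le hUr.le

/-- Sierpiński's theorem. -/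
theorem Nonatomic.exists_subset_measure_eq (hna : Nonatomic μ) (hA : MeasurableSet A)
    {r : ℝ≥0∞} (hr : r ≤ μ A) : ∃ B ⊆ A, MeasurableSet B ∧ μ B = r := by
  let ext (B : Set X) : Set (Set X) := {B' | B ⊆ B' ∧ B' ⊆ A ∧ MeasurableSet B' ∧ μ B' ≤ r}
  have step : ∀ B ∈ ext ∅, ∃ B' ∈ ext B, ∀ B'' ∈ ext B, μ B + μ B'' ≤ 2 * μ B' :=
    fun B hB => exists_mem_add_le_two_mul ⟨subset_rfl, hB.2⟩ <|
      ne_top_of_le_ne_top (measure_ne_top μ A) (iSup₂_le fun B'' h => measure_mono h.2.1)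
  choose! next hnext_mem hnext using step
  let seq (n : ℕ) : Set X := next^[n] ∅
  have hseq_succ : ∀ n, seq (n + 1) = next (seq n) := fun n => Function.iterate_succ_apply' _ _ _
  have hseq : ∀ n, seq n ∈ ext ∅ := by
    intro n
    induction n with
    | zero => exact ⟨subset_rfl, empty_subset _, .empty, by simp [seq]⟩
    | succ n ih => rw [hseq_succ]; exact ⟨empty_subset _, (hnext_mem _ ih).2⟩
  have hmono : Monotone seq := monotone_nat_of_le_succ fun n => by
    rw [hseq_succ]; exact (hnext_mem _ (hseq n)).1
  set U := ⋃ n, seq n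
  have hU : MeasurableSet U := .iUnion fun n => (hseq n).2.2.1
  have hUr : μ U ≤ r := by
    rw [hmono.measure_iUnion]
    exact iSup_le fun n => (hseq n).2.2.2
  refine ⟨U, iUnion_subset fun n => (hseq n).2.1, hU, hUr.antisymm (not_lt.1 fun hUr' => ?_)⟩
  -- Otherwise a small piece `T` of `A \ U` could be added at every stage, and the greedy
  -- choice would make `μ (seq n)` grow without bound.
  obtain ⟨T, hTAU, hT, hT0, hUT⟩ := hna.exists_subset_sdiff_pos_measure_union_le hA hU hUr' hr
  have hgrow : ∀ n : ℕ, n * μ T ≤ 2 * μ (seq n) := by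
    intro n
    induction n with
    | zero => simp
    | succ n ih =>
      have hdisj : Disjoint (seq n) T :=
        (disjoint_sdiff_right.mono_left (subset_iUnion seq n)).mono_right hTAU
      have hext : seq n ∪ T ∈ ext (seq n) := by
        refine ⟨subset_union_left, union_subset (hseq n).2.1 (hTAU.trans sdiff_subset),
          (hseq n).2.2.1.union hT, ?_⟩
        exact (measure_mono (union_subset_union_left T (subset_iUnion seq n))).trans hUT
      calc ((n + 1 : ℕ) : ℝ≥0∞) * μ T ≤ 2 * μ (seq n) + μ T := by
            push_cast; rw [add_mul, one_mul]; gcongr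
        _ = μ (seq n) + μ (seq n ∪ T) := by rw [measure_union hdisj hT]; ring
        _ ≤ 2 * μ (seq (n + 1)) := hseq_succ n ▸ hnext _ (hseq n) _ hext
  obtain ⟨n, hn⟩ := ENNReal.exists_nat_mul_gt hT0.ne' (by finiteness : 2 * μ A ≠ ∞)
  exact (hn.trans_le (hgrow n)).not_ge (by gcongr; exact (hseq n).2.1)

end Nonatomic

section DyadicChain

variable {X : Type*} [MeasurableSpace X]

noncomputable def halfSubset (μ : Measure X) (S : Set X) : Set X :=
  Classical.epsilon fun B => B ⊆ S ∧ MeasurableSet B ∧ μ B = μ S / 2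

noncomputable def dyadicSet (μ : Measure X) (A : Set X) : ℕ → ℕ → Set X
  | 0, k => if k = 0 then ∅ else A
  | n + 1, k =>
    if Even k then dyadicSet μ A n (k / 2)
    else dyadicSet μ A n (k / 2) ∪
      halfSubset μ (dyadicSet μ A n (k / 2 + 1) \ dyadicSet μ A n (k / 2))

variable {μ : Measure X} {A : Set X}

theorem dyadicSet_succ_two_mul (n k : ℕ) :
    dyadicSet μ A (n + 1) (2 * k) = dyadicSet μ A n k := by
  rw [dyadicSet, if_pos (even_two_mul k), Nat.mul_div_cancel_left k two_pos]

theorem dyadicSet_succ_two_mul_add_one (n k : ℕ) :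
    dyadicSet μ A (n + 1) (2 * k + 1) =
      dyadicSet μ A n k ∪ halfSubset μ (dyadicSet μ A n (k + 1) \ dyadicSet μ A n k) := by
  have hk : (2 * k + 1) / 2 = k := by omega
  rw [dyadicSet, if_neg (Nat.not_even_two_mul_add_one k), hk]

variable [IsFiniteMeasure μ]

theorem Nonatomic.halfSubset_spec (hna : Nonatomic μ) {S : Set X} (hS : MeasurableSet S) :
    halfSubset μ S ⊆ S ∧ MeasurableSet (halfSubset μ S) ∧ μ (halfSubset μ S) = μ S / 2 :=
  Classical.epsilon_spec (hna.exists_subset_measure_eq hS ENNReal.half_le_self)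

theorem Nonatomic.measurableSet_dyadicSet (hna : Nonatomic μ) (hA : MeasurableSet A) (n k : ℕ) :
    MeasurableSet (dyadicSet μ A n k) := by
  induction n generalizing k with
  | zero => unfold dyadicSet; split_ifs <;> simp [hA]
  | succ n ih =>
    obtain ⟨j, rfl | rfl⟩ := Nat.even_or_odd' k
    · rw [dyadicSet_succ_two_mul]; exact ih j
    · rw [dyadicSet_succ_two_mul_add_one]
      exact (ih j).union (hna.halfSubset_spec ((ih _).diff (ih _))).2.1

theorem Nonatomic.halfSubset_dyadicSet_subset (hna : Nonatomic μ) (hA : MeasurableSet A)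
    (n j : ℕ) :
    halfSubset μ (dyadicSet μ A n (j + 1) \ dyadicSet μ A n j) ⊆ dyadicSet μ A n (j + 1) :=
  (hna.halfSubset_spec ((hna.measurableSet_dyadicSet hA _ _).diff
    (hna.measurableSet_dyadicSet hA _ _))).1.trans sdiff_subset

theorem Nonatomic.dyadicSet_subset (hna : Nonatomic μ) (hA : MeasurableSet A) (n k : ℕ) :
    dyadicSet μ A n k ⊆ A := by
  induction n generalizing k with
  | zero => unfold dyadicSet; split_ifs <;> simp
  | succ n ih =>
    obtain ⟨j, rfl | rfl⟩ := Nat.even_or_odd' k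
    · rw [dyadicSet_succ_two_mul]; exact ih j
    · rw [dyadicSet_succ_two_mul_add_one]
      exact union_subset (ih j) ((hna.halfSubset_dyadicSet_subset hA n j).trans (ih _))

theorem Nonatomic.monotone_dyadicSet (hna : Nonatomic μ) (hA : MeasurableSet A) (n : ℕ) :
    Monotone (dyadicSet μ A n) := by
  refine monotone_nat_of_le_succ fun k => ?_
  induction n generalizing k with
  | zero => unfold dyadicSet; split_ifs <;> simp_all
  | succ n ih =>
    obtain ⟨j, rfl | rfl⟩ := Nat.even_or_odd' k
    · rw [dyadicSet_succ_two_mul, dyadicSet_succ_two_mul_add_one]; exact subset_union_left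
    · rw [dyadicSet_succ_two_mul_add_one, show 2 * j + 1 + 1 = 2 * (j + 1) by ring,
        dyadicSet_succ_two_mul]
      exact union_subset (ih j) (hna.halfSubset_dyadicSet_subset hA n j)

theorem Nonatomic.measureReal_dyadicSet (hna : Nonatomic μ) (hA : MeasurableSet A) {n k : ℕ}
    (hk : k ≤ 2 ^ n) :
    μ.real (dyadicSet μ A n k) = k / 2 ^ n * μ.real A := by
  induction n generalizing k with
  | zero => interval_cases k <;> simp [dyadicSet]
  | succ n ih =>
    obtain ⟨j, rfl | rfl⟩ := Nat.even_or_odd' k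
    · rw [dyadicSet_succ_two_mul, ih (by omega)]
      push_cast
      field_simp
      ring
    · have hmeas := hna.measurableSet_dyadicSet hA n
      obtain ⟨hHsub, hH, hμH⟩ := hna.halfSubset_spec ((hmeas (j + 1)).diff (hmeas j))
      have hHreal : μ.real (halfSubset μ (dyadicSet μ A n (j + 1) \ dyadicSet μ A n j)) =
          (μ.real (dyadicSet μ A n (j + 1)) - μ.real (dyadicSet μ A n j)) / 2 := by
        rw [measureReal_def, hμH, ENNReal.toReal_div, ← measureReal_def,
          measureReal_sdiff (hna.monotone_dyadicSet hA n j.le_succ) (hmeas j)]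
        simp
      rw [dyadicSet_succ_two_mul_add_one,
        measureReal_union (disjoint_sdiff_right.mono_right hHsub) hH, hHreal,
        ih (by omega), ih (by omega)]
      field_simp
      push_cast
      ring

end DyadicChain

section Chain

variable {X : Type*} [MeasurableSpace X] {μ : Measure X} [IsFiniteMeasure μ] {A : Set X}

theorem Nonatomic.exists_monotone_measureReal_eq (hna : Nonatomic μ) (hA : MeasurableSet A) :
    ∃ C : ℝ → Set X, Monotone C ∧ (∀ t, MeasurableSet (C t)) ∧ (∀ t, C t ⊆ A) ∧
      ∀ t, μ.real (C t) = max 0 (min 1 t) * μ.real A := by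
  let K (t : ℝ) (n : ℕ) : ℕ := ⌊max 0 (min 1 t) * 2 ^ n⌋₊
  refine ⟨fun t => ⋃ n, dyadicSet μ A n (K t n), fun t t' htt' => ?_,
    fun t => .iUnion fun n => hna.measurableSet_dyadicSet hA n _,
    fun t => iUnion_subset fun n => hna.dyadicSet_subset hA n _, fun t => ?_⟩
  · exact iUnion_mono fun n => hna.monotone_dyadicSet hA n (Nat.floor_mono (by gcongr))
  set c := max 0 (min 1 t)
  have hc0 : 0 ≤ c := le_max_left _ _
  have hK : ∀ n, K t n ≤ 2 ^ n := fun n => Nat.floor_le_of_le <| by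
    push_cast
    exact mul_le_of_le_one_left (by positivity) (max_le zero_le_one (min_le_left _ _))
  have hmono : Monotone fun n => dyadicSet μ A n (K t n) := by
    refine monotone_nat_of_le_succ fun n => ?_
    rw [← dyadicSet_succ_two_mul]
    refine hna.monotone_dyadicSet hA _ (Nat.le_floor ?_)
    have := Nat.floor_le (show 0 ≤ c * 2 ^ n by positivity)
    push_cast
    rw [pow_succ]
    linarith
  have hlim : Tendsto (fun n => μ.real (dyadicSet μ A n (K t n))) atTop (𝓝 (c * μ.real A)) := by
    simp_rw [hna.measureReal_dyadicSet hA (hK _)]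
    refine Tendsto.mul_const _ ?_
    exact (tendsto_nat_floor_mul_div_atTop hc0).comp
      (tendsto_pow_atTop_atTop_of_one_lt one_lt_two)
  exact tendsto_nhds_unique
    ((ENNReal.tendsto_toReal (measure_ne_top _ _)).comp (tendsto_measure_iUnion_atTop hmono)) hlim

end Chain

section SetIntegral

variable {X E : Type*} [MeasurableSpace X] {μ : Measure X} [NormedAddCommGroup E]
  [NormedSpace ℝ E]

theorem setIntegral_sdiff_union_of_subset {f : X → E} {Z T U : Set X} (hf : IntegrableOn f U μ)
    (hZT : Z ⊆ T) (hTU : T ⊆ U) (hZ : MeasurableSet Z) (hT : MeasurableSet T) :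
    ∫ x in (U \ T) ∪ Z, f x ∂μ = ∫ x in U, f x ∂μ - ∫ x in T, f x ∂μ + ∫ x in Z, f x ∂μ := by
  rw [setIntegral_union (disjoint_sdiff_left.mono_right hZT) hZ (hf.mono_set sdiff_subset)
    (hf.mono_set (hZT.trans hTU)), setIntegral_sdiff hT hf hTU]

theorem setIntegral_eq_add_sdiff_sub_sdiff {f : X → E} (hf : Integrable f μ) {S T : Set X}
    (hS : MeasurableSet S) (hT : MeasurableSet T) :
    ∫ x in S, f x ∂μ = ∫ x in T, f x ∂μ + ∫ x in S \ T, f x ∂μ - ∫ x in T \ S, f x ∂μ := by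
  rw [← integral_inter_add_sdiff hT hf.integrableOn,
    ← integral_inter_add_sdiff (s := T) hS hf.integrableOn, inter_comm]
  abel

theorem continuous_setIntegral_of_monotone [IsFiniteMeasure μ] {f : X → E} (hf : Integrable f μ)
    {C : ℝ → Set X} (hC : Monotone C) (hCm : ∀ t, MeasurableSet (C t))
    (hμC : Continuous fun t => μ.real (C t)) : Continuous fun t => ∫ x in C t, f x ∂μ := by
  refine continuous_iff_continuousAt.2 fun t => ?_
  have hsmall : ∀ {g h : ℝ → ℝ}, Continuous g → Continuous h → g t = t → h t = t →
      Tendsto (fun s => ∫ x in C (g s) \ C (h s), f x ∂μ) (𝓝 t) (𝓝 0) := by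
    intro g h hg hh hgt hht
    refine hf.tendsto_setIntegral_nhds_zero ?_
    have hdiff : ∀ s, μ (C (g s) \ C (h s)) =
        ENNReal.ofReal (μ.real (C (g s ⊔ h s)) - μ.real (C (h s))) := fun s => by
      rw [hC.map_sup, ← ofReal_measureReal]
      exact congrArg _ (measureReal_sdiff' (hCm _))
    simp_rw [Function.comp_def, hdiff]
    rw [← ENNReal.ofReal_zero]
    refine ENNReal.tendsto_ofReal ?_
    have := ((hμC.comp (hg.max hh)).tendsto t).sub ((hμC.comp hh).tendsto t)
    simpa [Function.comp_def, hgt, hht] using this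
  have hlim := ((tendsto_const_nhds (x := ∫ x in C t, f x ∂μ)).add
    (hsmall continuous_id continuous_const rfl rfl)).sub
    (hsmall continuous_const continuous_id rfl rfl)
  rw [add_zero, sub_zero] at hlim
  exact hlim.congr fun s => (setIntegral_eq_add_sdiff_sub_sdiff hf (hCm s) (hCm t)).symm

end SetIntegral

/-- For `t ∈ [0, 1]`, `h (t + b) + h (t + b - 1)` is the value of `h` at `t + b` modulo `1`. -/
theorem exists_shift_mod_one_eq {h : ℝ → ℝ} (hc : Continuous h) (h0 : ∀ t ≤ 0, h t = 0)
    (h1 : ∀ t, 1 ≤ t → h t = 0) {b : ℝ} (hb : b ∈ Icc (0 : ℝ) 1) :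
    ∃ t ∈ Icc (0 : ℝ) 1, h (t + b) + h (t + b - 1) = h t := by
  obtain ⟨p, hp, hmax⟩ :=
    isCompact_Icc.exists_isMaxOn (nonempty_Icc.2 zero_le_one) hc.continuousOn
  have hle : ∀ x, h x ≤ h p := fun x => by
    by_cases hx : x ∈ Icc (0 : ℝ) 1
    · exact hmax hx
    · rcases not_and_or.1 hx with hx | hx
      · rw [h0 x (not_le.1 hx).le, ← h0 0 le_rfl]; exact hmax (left_mem_Icc.2 zero_le_one)
      · rw [h1 x (not_le.1 hx).le, ← h0 0 le_rfl]; exact hmax (left_mem_Icc.2 zero_le_one)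
  obtain ⟨hb0, hb1⟩ := hb
  obtain ⟨hp0, hp1⟩ := hp
  set k : ℝ → ℝ := fun t => h (t + b) + h (t + b - 1) - h t
  have hkp : k p ≤ 0 := by
    simp only [k]
    rcases le_total (p + b) 1 with hpb | hpb
    · rw [h0 (p + b - 1) (by linarith)]; linarith [hle (p + b)]
    · rw [h1 (p + b) hpb]; linarith [hle (p + b - 1)]
  obtain ⟨q, hq, hkq⟩ : ∃ q ∈ Icc (0 : ℝ) 1, 0 ≤ k q := by
    rcases le_total b p with hbp | hpb
    · refine ⟨p - b, ⟨by linarith, by linarith⟩, ?_⟩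
      simp only [k, sub_add_cancel, h0 (p - 1) (by linarith)]
      linarith [hle (p - b)]
    · refine ⟨p - b + 1, ⟨by linarith, by linarith⟩, ?_⟩
      simp only [k, show p - b + 1 + b = p + 1 by ring, add_sub_cancel_right,
        h1 (p + 1) (by linarith)]
      linarith [hle (p - b + 1)]
  obtain ⟨t, ht, hkt⟩ := intermediate_value_uIcc (a := p) (b := q) (f := k)
    (by fun_prop) (mem_uIcc.2 (Or.inl ⟨hkp, hkq⟩))
  exact ⟨t, uIcc_subset_Icc ⟨hp0, hp1⟩ hq ht, by simpa [k, sub_eq_zero] using hkt⟩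

section Arc

variable {X : Type*} {C : ℝ → Set X}

/-- The arc from `t` to `t + b` when the parameter interval `[0, 1]` of `C` is read as a
circle. -/
def arc (C : ℝ → Set X) (t b : ℝ) : Set X := (C (t + b) \ C t) ∪ C (t + b - 1)

theorem arc_subset {A : Set X} (hCA : ∀ t, C t ⊆ A) (t b : ℝ) : arc C t b ⊆ A :=
  union_subset (sdiff_subset.trans (hCA _)) (hCA _)

variable [MeasurableSpace X] {μ : Measure X}

theorem measurableSet_arc (hCm : ∀ t, MeasurableSet (C t)) (t b : ℝ) :
    MeasurableSet (arc C t b) :=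
  ((hCm _).diff (hCm _)).union (hCm _)

theorem setIntegral_arc {f : X → ℝ} (hf : Integrable f μ) (hC : Monotone C)
    (hCm : ∀ t, MeasurableSet (C t)) {t b : ℝ} (hb : b ∈ Icc (0 : ℝ) 1) :
    ∫ x in arc C t b, f x ∂μ =
      ∫ x in C (t + b), f x ∂μ - ∫ x in C t, f x ∂μ + ∫ x in C (t + b - 1), f x ∂μ :=
  setIntegral_sdiff_union_of_subset hf.integrableOn (hC (by linarith [hb.2]))
    (hC (by linarith [hb.1])) (hCm _) (hCm _)

theorem measureReal_arc [IsFiniteMeasure μ] {A : Set X} (hC : Monotone C)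
    (hCm : ∀ t, MeasurableSet (C t)) (hμC : ∀ t, μ.real (C t) = max 0 (min 1 t) * μ.real A)
    {t b : ℝ} (ht : t ∈ Icc (0 : ℝ) 1) (hb : b ∈ Icc (0 : ℝ) 1) :
    μ.real (arc C t b) = b * μ.real A := by
  obtain ⟨ht0, ht1⟩ := ht
  obtain ⟨hb0, hb1⟩ := hb
  rw [arc, measureReal_union (disjoint_sdiff_left.mono_right (hC (by linarith))) (hCm _),
    measureReal_sdiff (hC (by linarith)) (hCm _), hμC, hμC, hμC, min_eq_right ht1,
    max_eq_right ht0]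
  rcases le_total (t + b) 1 with htb | htb
  · rw [min_eq_right htb, min_eq_right (by linarith), max_eq_right (by linarith),
      max_eq_left (by linarith)]
    ring
  · rw [min_eq_left htb, min_eq_right (by linarith), max_eq_right zero_le_one,
      max_eq_right (by linarith)]
    ring

end Arc

theorem Nonatomic.exists_subset_measure_eq_setIntegral_eq_zero {X : Type*} [MeasurableSpace X]
    {μ : Measure X} [IsFiniteMeasure μ] (hna : Nonatomic μ) {f : X → ℝ} (hf : Integrable f μ)
    {A : Set X} (hA : MeasurableSet A) (hfA : ∫ x in A, f x ∂μ = 0) {r : ℝ≥0∞} (hr : r ≤ μ A) :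
    ∃ B ⊆ A, MeasurableSet B ∧ μ B = r ∧ ∫ x in B, f x ∂μ = 0 := by
  obtain ⟨C, hC, hCm, hCA, hμC⟩ := hna.exists_monotone_measureReal_eq hA
  set F : ℝ → ℝ := fun t => ∫ x in C t, f x ∂μ
  have hF : Continuous F :=
    continuous_setIntegral_of_monotone hf hC hCm (by simp_rw [hμC]; fun_prop)
  have hF0 : ∀ t ≤ 0, F t = 0 := fun t ht => setIntegral_measure_zero _ <| by
    rw [← ofReal_measureReal, hμC, max_eq_left (min_le_of_right_le ht), zero_mul,
      ENNReal.ofReal_zero]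
  have hF1 : ∀ t, 1 ≤ t → F t = 0 := fun t ht => by
    refine (setIntegral_congr_set (ae_eq_of_subset_of_measure_ge (hCA t) ?_
      (hCm t).nullMeasurableSet (measure_ne_top μ A))).trans hfA
    rw [← ofReal_measureReal, ← ofReal_measureReal, hμC, min_eq_left ht,
      max_eq_right zero_le_one, one_mul]
  have hrA : r.toReal ≤ μ.real A := ENNReal.toReal_mono (measure_ne_top μ A) hr
  set b := r.toReal / μ.real A
  have hb : b ∈ Icc (0 : ℝ) 1 :=
    ⟨div_nonneg ENNReal.toReal_nonneg measureReal_nonneg, div_le_one_of_le₀ hrA measureReal_nonneg⟩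
  obtain ⟨t, ht, hFt⟩ := exists_shift_mod_one_eq hF hF0 hF1 hb
  refine ⟨arc C t b, arc_subset hCA t b, measurableSet_arc hCm t b, ?_, ?_⟩
  · rw [← ofReal_measureReal, measureReal_arc hC hCm hμC ht hb,
      div_mul_cancel_of_imp fun h => le_antisymm (h ▸ hrA) ENNReal.toReal_nonneg,
      ENNReal.ofReal_toReal (ne_top_of_le_ne_top (measure_ne_top μ A) hr)]
  · rw [setIntegral_arc hf hC hCm hb]
    linarith

theorem stmt0_general {X : Type*} [MeasurableSpace X] (μ : MeasureTheory.Measure X)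
    [IsProbabilityMeasure μ] (hna : Nonatomic μ)
    (φ : X → ℝ) (hφi : Integrable φ μ)
    (I : Set X) (hI : MeasurableSet I)
    (s : ℝ) (hs : s = (μ I).toReal⁻¹ * ∫ x in I, φ x ∂μ)
    (β : ℝ≥0∞) (hβ0 : 0 < β) (hβI : β ≤ μ I) :
    ∃ E : Set X, E ⊆ I ∧ MeasurableSet E ∧ μ E = β ∧
      (μ E).toReal⁻¹ * ∫ x in E, φ x ∂μ = s := by
  have hsub (S : Set X) : ∫ x in S, (φ x - s) ∂μ = ∫ x in S, φ x ∂μ - μ.real S * s := by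
    rw [integral_sub hφi.integrableOn (integrable_const s).integrableOn, setIntegral_const,
      smul_eq_mul]
  have hI0 : μ.real I ≠ 0 :=
    (ENNReal.toReal_pos (hβ0.trans_le hβI).ne' (measure_ne_top μ I)).ne'
  have hmean : ∫ x in I, (φ x - s) ∂μ = 0 := by
    rw [hsub, hs, ← measureReal_def, mul_inv_cancel_left₀ hI0, sub_self]
  obtain ⟨E, hEI, hE, hμE, hmeanE⟩ := hna.exists_subset_measure_eq_setIntegral_eq_zero
    (f := fun x => φ x - s) (hφi.sub (integrable_const s)) hI hmean hβI
  have hE0 : μ.real E ≠ 0 := (ENNReal.toReal_pos (hμE ▸ hβ0.ne') (measure_ne_top μ E)).ne'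
  refine ⟨E, hEI, hE, hμE, ?_⟩
  rw [hsub, sub_eq_zero] at hmeanE
  rw [hmeanE, ← measureReal_def, inv_mul_cancel_left₀ hE0]

/-- Lemma 2.1: on a non-atomic probability space, for any measurable `I` with `μ I > 0`
and any `β ∈ (0, μ I]` there is a measurable `E ⊆ I` with `μ E = β` and the same average. -/
theorem stmt0 {X : Type*} [MeasurableSpace X] (μ : MeasureTheory.Measure X)
    [IsProbabilityMeasure μ] (hna : Nonatomic μ)
    (φ : X → ℝ) (hφm : Measurable φ) (hφ0 : ∀ x, 0 ≤ φ x) (hφi : Integrable φ μ)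
    (I : Set X) (hI : MeasurableSet I) (hIpos : 0 < μ I)
    (s : ℝ) (hs : s = (μ I).toReal⁻¹ * ∫ x in I, φ x ∂μ)
    (β : ℝ≥0∞) (hβ0 : 0 < β) (hβI : β ≤ μ I) :
    ∃ E : Set X, E ⊆ I ∧ MeasurableSet E ∧ μ E = β ∧
      (μ E).toReal⁻¹ * ∫ x in E, φ x ∂μ = s :=
  stmt0_general μ hna φ hφi I hI s hs β hβ0 hβI
end

section
/- Let (X,μ) be a non-atomic probability measure space, p > 1, and φ : X → [0,∞) measurable with ∫_X φ dμ = f and |||φ|||_{p,∞} = F, where 0 < f ≤ F. Let I ⊆ X be measurable with μ(I) > 0 and set s = (1/μ(I)) ∫_I φ dμ. Define ψ : X → [0,∞) by ψ(t) = φ(t) for t ∈ X∖I and ψ(t) = s for t ∈ I. Then ∫_X ψ dμ = f and |||ψ|||_{p,∞} ≤ F. -/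
open MeasureTheory Set Filter ENNReal

/-!
With `q = 1 - 1/p ∈ (0, 1]`, the bound `|||φ|||_{p,∞} ≤ F` says `∫_S φ ≤ F μ(S)^q` for every `S`.
Averaging over `I` keeps `∫_{E \ I} φ` and replaces `∫_{E ∩ I} φ` by the fraction
`θ = μ(E ∩ I) / μ(I)` of `∫_I φ`, so `∫_E ψ = (1 - θ) ∫_{E \ I} φ + θ ∫_{(E \ I) ∪ I} φ`
is at most `F ((1 - θ) μ(E \ I)^q + θ (μ(E \ I) + μ(I))^q)`. Concavity of `t ↦ t^q`
bounds this by `F (μ(E \ I) + θ μ(I))^q = F μ(E)^q`.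
-/

theorem ENNReal.arith_mean2_rpow_le_rpow_arith_mean {q : ℝ} (hq₀ : 0 < q) (hq₁ : q ≤ 1)
    (w₁ w₂ x y : ℝ≥0∞) (hw : w₁ + w₂ = 1) :
    w₁ * x ^ q + w₂ * y ^ q ≤ (w₁ * x + w₂ * y) ^ q := by
  have hinv : ∀ z : ℝ≥0∞, (z ^ q) ^ (1 / q) = z := fun z => by
    rw [← ENNReal.rpow_mul, mul_one_div_cancel hq₀.ne', ENNReal.rpow_one]
  have h := ENNReal.rpow_arith_mean_le_arith_mean2_rpow w₁ w₂ (x ^ q) (y ^ q) hw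
    ((one_le_div hq₀).2 hq₁)
  rw [hinv, hinv] at h
  simpa only [← ENNReal.rpow_mul, one_div_mul_cancel hq₀.ne', ENNReal.rpow_one] using
    ENNReal.rpow_le_rpow h hq₀.le

theorem ENNReal.add_mul_le_mul_rpow_add_mul {q : ℝ} (hq₀ : 0 < q) (hq₁ : q ≤ 1)
    {θ u A a m C : ℝ≥0∞} (hθ : θ ≤ 1) (hu : u ≤ C * a ^ q) (huA : u + A ≤ C * (a + m) ^ q) :
    u + θ * A ≤ C * (a + θ * m) ^ q := by
  have hw : (1 - θ) + θ = 1 := tsub_add_cancel_of_le hθ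
  calc u + θ * A = (1 - θ) * u + θ * (u + A) := by
        rw [mul_add, ← add_assoc, ← add_mul, hw, one_mul]
    _ ≤ (1 - θ) * (C * a ^ q) + θ * (C * (a + m) ^ q) := by gcongr
    _ = C * ((1 - θ) * a ^ q + θ * (a + m) ^ q) := by ring
    _ ≤ C * ((1 - θ) * a + θ * (a + m)) ^ q := by
        gcongr; exact ENNReal.arith_mean2_rpow_le_rpow_arith_mean hq₀ hq₁ _ _ _ _ hw
    _ = C * (a + θ * m) ^ q := by
        rw [mul_add θ, ← add_assoc, ← add_mul, hw, one_mul]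

section Averaging

variable {X : Type*} [MeasurableSpace X] {μ : Measure X}

theorem tripleNorm_le_iff [IsFiniteMeasure μ] {p : ℝ} {φ : X → ℝ} {C : ℝ≥0∞} :
    tripleNorm μ p φ ≤ C ↔
      ∀ E, MeasurableSet E → ∫⁻ x in E, ENNReal.ofReal |φ x| ∂μ ≤ C * μ E ^ (1 - 1 / p) := by
  have key : ∀ E, μ E ≠ 0 → (μ E ^ (-1 + 1 / p) * ∫⁻ x in E, ENNReal.ofReal |φ x| ∂μ ≤ C ↔
      ∫⁻ x in E, ENNReal.ofReal |φ x| ∂μ ≤ C * μ E ^ (1 - 1 / p)) := fun E hE => by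
    rw [show -1 + 1 / p = -(1 - 1 / p) by ring, ENNReal.rpow_neg, ← ENNReal.div_eq_inv_mul,
      ENNReal.div_le_iff (ENNReal.rpow_pos (pos_iff_ne_zero.2 hE) (measure_ne_top μ E)).ne'
        (ENNReal.rpow_ne_top_of_ne_zero hE (measure_ne_top μ E))]
  simp only [tripleNorm, iSup_le_iff]
  refine ⟨fun h E hE => ?_, fun h E hE hE₀ => (key E hE₀.ne').2 (h E hE)⟩
  rcases eq_or_ne (μ E) 0 with hE₀ | hE₀
  · simp [Measure.restrict_eq_zero.2 hE₀]
  · exact (key E hE₀).1 (h E hE (pos_iff_ne_zero.2 hE₀))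

theorem setLIntegral_piecewise_const {I E : Set X} [DecidablePred (· ∈ I)]
    (hI : MeasurableSet I) (hE : MeasurableSet E) (c : ℝ≥0∞) (g : X → ℝ≥0∞) :
    ∫⁻ x in E, I.piecewise (fun _ => c) g x ∂μ = c * μ (E ∩ I) + ∫⁻ x in E \ I, g x ∂μ := by
  rw [← lintegral_inter_add_sdiff _ E hI,
    setLIntegral_congr_fun (hE.inter hI) ((I.piecewise_eqOn _ g).mono inter_subset_right),
    setLIntegral_congr_fun (hE.diff hI) ((I.piecewise_eqOn_compl _ g).mono fun _ hx => hx.2),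
    setLIntegral_const]

theorem lintegral_piecewise_setLAverage [IsFiniteMeasure μ] {I : Set X} [DecidablePred (· ∈ I)]
    (hI : MeasurableSet I) (g : X → ℝ≥0∞) :
    ∫⁻ x, I.piecewise (fun _ => ⨍⁻ y in I, g y ∂μ) g x ∂μ = ∫⁻ x, g x ∂μ := by
  rw [← setLIntegral_univ, setLIntegral_piecewise_const hI MeasurableSet.univ, univ_inter,
    mul_comm, measure_mul_setLAverage _ (measure_ne_top μ I), ← compl_eq_univ_sdiff,
    lintegral_add_compl _ hI]

theorem setLIntegral_piecewise_setLAverage_le [IsFiniteMeasure μ] {q : ℝ} (hq₀ : 0 < q)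
    (hq₁ : q ≤ 1) {g : X → ℝ≥0∞} {C : ℝ≥0∞}
    (hg : ∀ S, MeasurableSet S → ∫⁻ x in S, g x ∂μ ≤ C * μ S ^ q)
    {I : Set X} [DecidablePred (· ∈ I)] (hI : MeasurableSet I) (hI₀ : μ I ≠ 0)
    {E : Set X} (hE : MeasurableSet E) :
    ∫⁻ x in E, I.piecewise (fun _ => ⨍⁻ y in I, g y ∂μ) g x ∂μ ≤ C * μ E ^ q := by
  set θ := μ (E ∩ I) / μ I
  have hθ : θ ≤ 1 :=
    ENNReal.div_le_of_le_mul (by rw [one_mul]; exact measure_mono inter_subset_right)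
  have hθI : θ * μ I = μ (E ∩ I) := ENNReal.div_mul_cancel hI₀ (measure_ne_top μ I)
  have hdisj : Disjoint (E \ I) I := disjoint_sdiff_left
  have hunion := hg _ ((hE.diff hI).union hI)
  rw [lintegral_union hI hdisj, measure_union hdisj hI] at hunion
  have h := ENNReal.add_mul_le_mul_rpow_add_mul hq₀ hq₁ hθ (hg _ (hE.diff hI)) hunion
  rw [hθI, measure_sdiff_add_inter _ hI] at h
  have hsplit : ∫⁻ x in E, I.piecewise (fun _ => ⨍⁻ y in I, g y ∂μ) g x ∂μ =
      ∫⁻ x in E \ I, g x ∂μ + θ * ∫⁻ x in I, g x ∂μ := by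
    rw [setLIntegral_piecewise_const hI hE, setLAverage_eq, add_comm]
    simp only [θ, div_eq_mul_inv]
    ring
  rwa [hsplit]

end Averaging

theorem stmt1_general {X : Type*} [MeasurableSpace X] (μ : MeasureTheory.Measure X)
    [IsProbabilityMeasure μ]
    (p : ℝ) (hp : 1 < p)
    (φ : X → ℝ) (hφ0 : ∀ x, 0 ≤ φ x)
    (f F : ℝ)
    (hint : ∫⁻ x, ENNReal.ofReal (φ x) ∂μ = ENNReal.ofReal f)
    (hnorm : tripleNorm μ p φ = ENNReal.ofReal F)
    (I : Set X) (hI : MeasurableSet I) (hIpos : 0 < μ I)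
    (s : ℝ) (hs : s = ((∫⁻ x in I, ENNReal.ofReal (φ x) ∂μ) / μ I).toReal)
    (ψ : X → ℝ) (hψI : ∀ x ∈ I, ψ x = s) (hψO : ∀ x ∉ I, ψ x = φ x) :
    (∫⁻ x, ENNReal.ofReal (ψ x) ∂μ = ENNReal.ofReal f) ∧
      tripleNorm μ p ψ ≤ ENNReal.ofReal F := by
  classical
  set g : X → ℝ≥0∞ := fun x => ENNReal.ofReal (φ x)
  have hq₀ : 0 < 1 - 1 / p := by rw [sub_pos, div_lt_one (by linarith)]; exact hp
  have hq₁ : 1 - 1 / p ≤ 1 := by linarith [one_div_pos.2 (zero_lt_one.trans hp)]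
  have hs' : ENNReal.ofReal s = ⨍⁻ y in I, g y ∂μ := by
    have hfin : ∫⁻ x in I, g x ∂μ ≠ ∞ :=
      ne_top_of_le_ne_top (hint ▸ ofReal_ne_top) (setLIntegral_le_lintegral I g)
    rw [hs, ← setLAverage_eq, ENNReal.ofReal_toReal (setLAverage_lt_top hfin).ne]
  have hψ : ∀ x, ENNReal.ofReal (ψ x) = I.piecewise (fun _ => ⨍⁻ y in I, g y ∂μ) g x := by
    intro x
    by_cases hx : x ∈ I <;> simp [hx, hψI, hψO, hs', g]
  have hψ0 : ∀ x, 0 ≤ ψ x := fun x => by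
    by_cases hx : x ∈ I
    · rw [hψI x hx, hs]; exact ENNReal.toReal_nonneg
    · rw [hψO x hx]; exact hφ0 x
  refine ⟨by simp only [hψ, lintegral_piecewise_setLAverage hI, g, hint], ?_⟩
  have hg := tripleNorm_le_iff.1 hnorm.le
  simp only [abs_of_nonneg, hφ0] at hg
  refine tripleNorm_le_iff.2 fun E hE => ?_
  simp only [abs_of_nonneg, hψ0, hψ]
  exact setLIntegral_piecewise_setLAverage_le hq₀ hq₁ hg hI hIpos.ne' hE

/-- Proposition 2.2: replacing `φ` on `I` by its average over `I` preserves the integral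
and does not increase the norm `|||·|||_{p,∞}`. -/
theorem stmt1 {X : Type*} [MeasurableSpace X] (μ : MeasureTheory.Measure X)
    [IsProbabilityMeasure μ] (hna : Nonatomic μ)
    (p : ℝ) (hp : 1 < p)
    (φ : X → ℝ) (hφm : Measurable φ) (hφ0 : ∀ x, 0 ≤ φ x)
    (f F : ℝ) (hf : 0 < f) (hfF : f ≤ F)
    (hint : ∫⁻ x, ENNReal.ofReal (φ x) ∂μ = ENNReal.ofReal f)
    (hnorm : tripleNorm μ p φ = ENNReal.ofReal F)
    (I : Set X) (hI : MeasurableSet I) (hIpos : 0 < μ I)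
    (s : ℝ) (hs : s = ((∫⁻ x in I, ENNReal.ofReal (φ x) ∂μ) / μ I).toReal)
    (ψ : X → ℝ) (hψI : ∀ x ∈ I, ψ x = s) (hψO : ∀ x ∉ I, ψ x = φ x) :
    (∫⁻ x, ENNReal.ofReal (ψ x) ∂μ = ENNReal.ofReal f) ∧
      tripleNorm μ p ψ ≤ ENNReal.ofReal F :=
  stmt1_general μ p hp φ hφ0 f F hint hnorm I hI hIpos s hs ψ hψI hψO
end

section
/- Let (X,μ) be a non-atomic probability measure space and T a tree on X. Then for every I ∈ T and every a with 0 < a < 1 there exists a subfamily F(I) ⊆ T consisting of pairwise almost disjoint subsets of I such that μ(⋃_{J∈F(I)} J) = Σ_{J∈F(I)} μ(J) = (1−a)·μ(I). -/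
open MeasureTheory Set Filter ENNReal

/-!
Descend the tree greedily towards a family of total mass `c < μ I`. Keep a current node `J`, a
remaining mass `0 ≤ t < μ J`, and finitely many chosen nodes, almost disjoint from each other and
from `J`, of total mass `c - t`. As the children of `J` partition it, some of them can be chosen
with total mass at most `t` while one further child `K` brings it above `t`; continue from `K`.
The current node lies one level deeper at each step, so its measure, and with it the remaining
mass, tends to `0`.
-/

theorem Finset.exists_subset_sum_le_lt_sum_add {α β : Type*} [AddCommGroup β]
    [LinearOrder β] [IsOrderedAddMonoid β] (f : α → β) {s : Finset α} {t : β} (ht : 0 ≤ t)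
    (hts : t < ∑ x ∈ s, f x) :
    ∃ S ⊆ s, ∃ K ∈ s, K ∉ S ∧ ∑ x ∈ S, f x ≤ t ∧ t < ∑ x ∈ S, f x + f K := by
  classical
  induction s using Finset.induction_on generalizing t with
  | empty => exact absurd (ht.trans_lt hts) (by simp)
  | insert K s hKs ih =>
    by_cases htK : t < f K
    · exact ⟨∅, empty_subset _, K, mem_insert_self K s, notMem_empty K, by simpa using ht,
        by simpa using htK⟩
    rw [sum_insert hKs] at hts
    obtain ⟨S, hSs, L, hLs, hLS, hle, hlt⟩ :=
      ih (sub_nonneg.2 (not_lt.1 htK)) (sub_lt_iff_lt_add'.2 hts)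
    have hKS : K ∉ S := fun h => hKs (hSs h)
    refine ⟨insert K S, insert_subset_insert K hSs, L, mem_insert_of_mem hLs, ?_, ?_, ?_⟩
    · rw [mem_insert, not_or]
      exact ⟨fun h => hKs (h ▸ hLs), hLS⟩
    · rw [sum_insert hKS]; exact le_sub_iff_add_le'.1 hle
    · rw [sum_insert hKS, add_assoc]; exact sub_lt_iff_lt_add'.1 hlt

namespace TreeOn

variable {X : Type*} [MeasurableSpace X] {μ : Measure X} (T : TreeOn X μ)

theorem mem_carrier_of_mem_level {J : Set X} {n : ℕ} (hJ : J ∈ T.level n) : J ∈ T.carrier :=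
  T.carrier_eq ▸ mem_iUnion.2 ⟨n, hJ⟩

theorem exists_mem_level {J : Set X} (hJ : J ∈ T.carrier) : ∃ n, J ∈ T.level n :=
  mem_iUnion.1 (T.carrier_eq ▸ hJ)

theorem measure_eq_sum_child {J : Set X} (hJ : J ∈ T.carrier) :
    μ J = ∑ K ∈ (T.child_finite J hJ).toFinset, μ K := by
  conv_lhs => rw [← T.child_union J hJ, sUnion_eq_biUnion,
    ← Finite.coe_toFinset (T.child_finite J hJ), Finset.set_biUnion_coe]
  refine measure_biUnion_finset₀ (fun K hK L hL hKL => ?_) fun K hK => ?_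
  · simp only [Finite.coe_toFinset] at hK hL
    exact T.child_almost_disjoint J hJ K hK L hL hKL
  · rw [Finite.mem_toFinset] at hK
    exact (T.meas K (T.child_subset_carrier J hJ hK)).nullMeasurableSet

theorem tendsto_measure_of_mem_level {J : ℕ → Set X} {m : ℕ → ℕ}
    (hm : Tendsto m atTop atTop) (hJ : ∀ k, J k ∈ T.level (m k)) :
    Tendsto (fun k => μ (J k)) atTop (nhds 0) :=
  tendsto_of_tendsto_of_tendsto_of_le_of_le tendsto_const_nhds (T.level_tendsto.comp hm)
    (fun _ => zero_le) fun k => le_biSup μ (hJ k)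

theorem exists_child_split [IsFiniteMeasure μ] {J : Set X} (hJ : J ∈ T.carrier) {t : ℝ}
    (ht : 0 ≤ t) (htJ : t < (μ J).toReal) :
    ∃ S : Finset (Set X), ↑S ⊆ T.child J ∧ ∃ K ∈ T.child J, K ∉ S ∧
      ∑ L ∈ S, (μ L).toReal ≤ t ∧ t < ∑ L ∈ S, (μ L).toReal + (μ K).toReal := by
  rw [T.measure_eq_sum_child hJ, toReal_sum fun K _ => measure_ne_top μ K] at htJ
  obtain ⟨S, hS, K, hK, hKS, hle, hlt⟩ := Finset.exists_subset_sum_le_lt_sum_add _ ht htJ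
  refine ⟨S, fun L hL => ?_, K, (Finite.mem_toFinset _).1 hK, hKS, hle, hlt⟩
  exact (Finite.mem_toFinset _).1 (hS hL)

variable (I : Set X) (c : ℝ)

structure GreedyState (n : ℕ) where
  cur : Set X
  rem : ℝ
  chosen : Finset (Set X)
  cur_mem_level : cur ∈ T.level n
  cur_subset : cur ⊆ I
  rem_nonneg : 0 ≤ rem
  rem_lt : rem < (μ cur).toReal
  chosen_subset_carrier : ↑chosen ⊆ T.carrier
  chosen_subset : ∀ L ∈ chosen, L ⊆ I
  chosen_aedisjoint_cur : ∀ L ∈ chosen, AEDisjoint μ L cur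
  chosen_pairwise : (chosen : Set (Set X)).Pairwise (AEDisjoint μ)
  sum_chosen_add_rem : ∑ L ∈ chosen, (μ L).toReal + rem = c

variable {T I c}

namespace GreedyState

def init {n : ℕ} (hI : I ∈ T.level n) (hc : 0 ≤ c) (hcI : c < (μ I).toReal) :
    GreedyState T I c n where
  cur := I
  rem := c
  chosen := ∅
  cur_mem_level := hI
  cur_subset := subset_rfl
  rem_nonneg := hc
  rem_lt := hcI
  chosen_subset_carrier := by simp
  chosen_subset := by simp
  chosen_aedisjoint_cur := by simp
  chosen_pairwise := by simp
  sum_chosen_add_rem := by simp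

variable [IsFiniteMeasure μ] {n : ℕ}

theorem exists_next (s : GreedyState T I c n) :
    ∃ s' : GreedyState T I c (n + 1), s.chosen ⊆ s'.chosen := by
  classical
  have hJ := T.mem_carrier_of_mem_level s.cur_mem_level
  obtain ⟨S, hS, K, hK, hKS, hle, hlt⟩ := T.exists_child_split hJ s.rem_nonneg s.rem_lt
  have hSJ : ∀ L ∈ S, L ⊆ s.cur := fun L hL => T.child_sub _ hJ L (hS hL)
  have hKJ : K ⊆ s.cur := T.child_sub _ hJ K hK
  have hdisj : Disjoint s.chosen S := Finset.disjoint_left.2 fun L hLc hLS =>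
    (T.pos L (T.child_subset_carrier _ hJ (hS hLS))).ne'
      (inter_eq_self_of_subset_left (hSJ L hLS) ▸ s.chosen_aedisjoint_cur L hLc)
  refine ⟨{
    cur := K
    rem := s.rem - ∑ L ∈ S, (μ L).toReal
    chosen := s.chosen ∪ S
    cur_mem_level := T.level_succ n ▸ mem_biUnion s.cur_mem_level hK
    cur_subset := hKJ.trans s.cur_subset
    rem_nonneg := sub_nonneg.2 hle
    rem_lt := by linarith
    chosen_subset_carrier := by
      rw [Finset.coe_union]
      exact union_subset s.chosen_subset_carrier (hS.trans (T.child_subset_carrier _ hJ))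
    chosen_subset := by
      simp only [Finset.mem_union]
      rintro L (hL | hL)
      exacts [s.chosen_subset L hL, (hSJ L hL).trans s.cur_subset]
    chosen_aedisjoint_cur := by
      simp only [Finset.mem_union]
      rintro L (hL | hL)
      · exact AEDisjoint.mono (s.chosen_aedisjoint_cur L hL) subset_rfl hKJ
      · exact T.child_almost_disjoint _ hJ L (hS hL) K hK (ne_of_mem_of_not_mem hL hKS)
    chosen_pairwise := by
      rw [Finset.coe_union, pairwise_union]
      refine ⟨s.chosen_pairwise,
        fun L hL M hM => T.child_almost_disjoint _ hJ L (hS hL) M (hS hM), fun L hL M hM _ => ?_⟩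
      have h := AEDisjoint.mono (s.chosen_aedisjoint_cur L hL) subset_rfl (hSJ M hM)
      exact ⟨h, h.symm⟩
    sum_chosen_add_rem := by
      rw [Finset.sum_union hdisj]
      linarith [s.sum_chosen_add_rem] }, Finset.subset_union_left⟩

noncomputable def next (s : GreedyState T I c n) : GreedyState T I c (n + 1) :=
  s.exists_next.choose

theorem chosen_subset_next (s : GreedyState T I c n) : s.chosen ⊆ s.next.chosen :=
  s.exists_next.choose_spec

noncomputable def seq (s : GreedyState T I c n) : (k : ℕ) → GreedyState T I c (n + k)
  | 0 => s
  | k + 1 => (seq s k).next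

theorem monotone_chosen_seq (s : GreedyState T I c n) :
    Monotone fun k => ((s.seq k).chosen : Set (Set X)) :=
  monotone_nat_of_le_succ fun k => Finset.coe_subset.2 (s.seq k).chosen_subset_next

theorem tendsto_rem_seq (s : GreedyState T I c n) :
    Tendsto (fun k => (s.seq k).rem) atTop (nhds 0) := by
  have hcur := T.tendsto_measure_of_mem_level
    (tendsto_atTop_mono (Nat.le_add_left · n) tendsto_id) fun k => (s.seq k).cur_mem_level
  refine squeeze_zero (fun k => (s.seq k).rem_nonneg) (fun k => (s.seq k).rem_lt.le) ?_
  simpa [Function.comp_def] using (ENNReal.tendsto_toReal zero_ne_top).comp hcur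

theorem measure_sUnion_chosen (s : GreedyState T I c n) :
    μ (⋃₀ ↑s.chosen) = ENNReal.ofReal (c - s.rem) := by
  have hsum : c - s.rem = ∑ L ∈ s.chosen, (μ L).toReal := by linarith [s.sum_chosen_add_rem]
  rw [sUnion_eq_biUnion, Finset.set_biUnion_coe, measure_biUnion_finset₀ s.chosen_pairwise
    fun L hL => (T.meas L (s.chosen_subset_carrier hL)).nullMeasurableSet,
    hsum, ofReal_sum_of_nonneg fun _ _ => toReal_nonneg]
  exact Finset.sum_congr rfl fun L _ => (ofReal_toReal (measure_ne_top μ L)).symm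

theorem exists_family (s : GreedyState T I c n) :
    ∃ F ⊆ T.carrier, F.Countable ∧ (∀ J ∈ F, J ⊆ I) ∧ F.Pairwise (AEDisjoint μ) ∧
      μ (⋃₀ F) = ENNReal.ofReal c := by
  have hC := s.monotone_chosen_seq
  refine ⟨⋃ k, ↑(s.seq k).chosen, iUnion_subset fun k => (s.seq k).chosen_subset_carrier,
    countable_iUnion fun k => (s.seq k).chosen.countable_toSet, fun J hJ => ?_,
    (pairwise_iUnion hC.directed_le).2 fun k => (s.seq k).chosen_pairwise, ?_⟩
  · obtain ⟨k, hk⟩ := mem_iUnion.1 hJ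
    exact (s.seq k).chosen_subset J hk
  have hU : Monotone fun k => ⋃₀ ((s.seq k).chosen : Set (Set X)) := fun i j hij =>
    sUnion_mono (hC hij)
  rw [sUnion_iUnion, hU.measure_iUnion]
  refine iSup_eq_of_tendsto (fun i j hij => measure_mono (hU hij)) ?_
  simp only [measure_sUnion_chosen]
  have hrem : Tendsto (fun k => c - (s.seq k).rem) atTop (nhds c) := by
    simpa using (tendsto_const_nhds (x := c)).sub s.tendsto_rem_seq
  exact (continuous_ofReal.tendsto c).comp hrem

end GreedyState

end TreeOn

theorem stmt2_general {X : Type*} [MeasurableSpace X] (μ : MeasureTheory.Measure X)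
    [IsProbabilityMeasure μ] (T : TreeOn X μ)
    (I : Set X) (hI : I ∈ T.carrier) (a : ℝ) (ha0 : 0 < a) (ha1 : a < 1) :
    ∃ F : Set (Set X), F ⊆ T.carrier ∧ F.Countable ∧ (∀ J ∈ F, J ⊆ I) ∧
      (∀ J ∈ F, ∀ K ∈ F, J ≠ K → μ (J ∩ K) = 0) ∧
      μ (⋃₀ F) = ∑' J : F, μ (J : Set X) ∧
      ∑' J : F, μ (J : Set X) = ENNReal.ofReal (1 - a) * μ I := by
  obtain ⟨n, hn⟩ := T.exists_mem_level hI
  have hμI : 0 < (μ I).toReal := toReal_pos (T.pos I hI).ne' (measure_ne_top μ I)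
  obtain ⟨F, hFT, hFc, hFI, hFd, hFμ⟩ :=
    (TreeOn.GreedyState.init (c := (1 - a) * (μ I).toReal) hn
      (mul_nonneg (by linarith) hμI.le) (mul_lt_of_lt_one_left hμI (by linarith))).exists_family
  have hsum := measure_sUnion₀ hFc hFd fun J hJ => (T.meas J (hFT hJ)).nullMeasurableSet
  refine ⟨F, hFT, hFc, hFI, fun J hJ K hK => hFd hJ hK, hsum, ?_⟩
  rw [← hsum, hFμ, ofReal_mul (by linarith), ofReal_toReal (measure_ne_top μ I)]

/-- Lemma 2.3: for every `I ∈ T` and `0 < a < 1` there is a subfamily of `T` of pairwise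
almost disjoint subsets of `I` whose union has measure `(1-a)·μ I`. -/
theorem stmt2 {X : Type*} [MeasurableSpace X] (μ : MeasureTheory.Measure X)
    [IsProbabilityMeasure μ] (hna : Nonatomic μ) (T : TreeOn X μ)
    (I : Set X) (hI : I ∈ T.carrier) (a : ℝ) (ha0 : 0 < a) (ha1 : a < 1) :
    ∃ F : Set (Set X), F ⊆ T.carrier ∧ F.Countable ∧ (∀ J ∈ F, J ⊆ I) ∧
      (∀ J ∈ F, ∀ K ∈ F, J ≠ K → μ (J ∩ K) = 0) ∧
      μ (⋃₀ F) = ∑' J : F, μ (J : Set X) ∧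
      ∑' J : F, μ (J : Set X) = ENNReal.ofReal (1 - a) * μ I :=
  stmt2_general μ T I hI a ha0 ha1
end

section
/- Let (X,μ) be a non-atomic probability measure space, T a tree on X, M_T the associated maximal operator, p > 1 and F > 0. If φ : X → [0,∞) is measurable with |||φ|||_{p,∞} ≤ F, then for every λ > 0, μ({x ∈ X : M_T φ(x) ≥ λ}) ≤ F^p/λ^p. -/
open MeasureTheory Set Filter ENNReal

/-! For `0 < c < λ`, call a tree set good if the average of `|φ|` over it exceeds `c`. Since the
levels of `T` shrink to measure zero, a set of positive measure lies in only finitely many tree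
sets, so every good set lies in a maximal good set; and two tree sets are either nested or almost
disjoint, so the maximal good sets are pairwise almost disjoint. Their union `U` covers
`{M_T φ > c}` and satisfies `c μ(U) ≤ ∫_U |φ| ≤ F μ(U)^(1 - 1/p)`, i.e. `μ(U) ≤ F^p / c^p`.
Letting `c ↑ λ` gives the bound. -/

open Topology

namespace TreeOn

variable {X : Type*} [MeasurableSpace X] {μ : Measure X} (T : TreeOn X μ)

lemma level_subset_carrier (m : ℕ) : T.level m ⊆ T.carrier := by
  rw [T.carrier_eq]
  exact subset_iUnion T.level m

lemma level_finite (m : ℕ) : (T.level m).Finite := by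
  induction m with
  | zero => rw [T.level_zero]; exact finite_singleton _
  | succ m ih =>
    rw [T.level_succ]
    exact ih.biUnion fun I hI => T.child_finite I (T.level_subset_carrier m hI)

lemma countable_carrier : T.carrier.Countable := by
  rw [T.carrier_eq]
  exact countable_iUnion fun m => (T.level_finite m).countable

lemma exists_ancestor {m n : ℕ} (hmn : m ≤ n) {J : Set X} (hJ : J ∈ T.level n) :
    ∃ I ∈ T.level m, J ⊆ I := by
  induction n, hmn using Nat.le_induction generalizing J with
  | base => exact ⟨J, hJ, subset_rfl⟩
  | succ n _ ih =>
    rw [T.level_succ, mem_iUnion₂] at hJ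
    obtain ⟨K, hK, hJK⟩ := hJ
    obtain ⟨I, hI, hKI⟩ := ih hK
    exact ⟨I, hI, (T.child_sub K (T.level_subset_carrier n hK) J hJK).trans hKI⟩

lemma pairwise_aedisjoint_level (m : ℕ) : (T.level m).Pairwise (AEDisjoint μ) := by
  induction m with
  | zero => rw [T.level_zero]; exact pairwise_singleton _ _
  | succ m ih =>
    rw [T.level_succ]
    intro I hI J hJ hIJ
    rw [mem_iUnion₂] at hI hJ
    obtain ⟨A, hA, hIA⟩ := hI
    obtain ⟨B, hB, hJB⟩ := hJ
    have hAT := T.level_subset_carrier m hA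
    obtain rfl | hAB := eq_or_ne A B
    · exact T.child_almost_disjoint A hAT I hIA J hJB hIJ
    · exact (ih hA hB hAB).mono (T.child_sub A hAT I hIA)
        (T.child_sub B (T.level_subset_carrier m hB) J hJB)

lemma subset_or_aedisjoint_of_le {m n : ℕ} (hmn : m ≤ n) {I J : Set X} (hI : I ∈ T.level m)
    (hJ : J ∈ T.level n) : J ⊆ I ∨ AEDisjoint μ I J := by
  obtain ⟨A, hA, hJA⟩ := T.exists_ancestor hmn hJ
  obtain rfl | hAI := eq_or_ne A I
  · exact Or.inl hJA
  · exact Or.inr ((T.pairwise_aedisjoint_level m hI hA hAI.symm).mono subset_rfl hJA)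

lemma subset_or_subset_or_aedisjoint {I J : Set X} (hI : I ∈ T.carrier) (hJ : J ∈ T.carrier) :
    I ⊆ J ∨ J ⊆ I ∨ AEDisjoint μ I J := by
  rw [T.carrier_eq, mem_iUnion] at hI hJ
  obtain ⟨m, hm⟩ := hI
  obtain ⟨n, hn⟩ := hJ
  rcases le_total m n with hmn | hnm
  · rcases T.subset_or_aedisjoint_of_le hmn hm hn with h | h <;> simp [h]
  · rcases T.subset_or_aedisjoint_of_le hnm hn hm with h | h
    · exact Or.inl h
    · exact Or.inr (Or.inr h.symm)

lemma finite_setOf_superset {I : Set X} (hI : 0 < μ I) : {J ∈ T.carrier | I ⊆ J}.Finite := by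
  obtain ⟨N, hN⟩ := eventually_atTop.mp (T.level_tendsto.eventually (gt_mem_nhds hI))
  refine ((finite_Iic N).biUnion fun n _ => T.level_finite n).subset ?_
  rintro J ⟨hJ, hIJ⟩
  rw [T.carrier_eq, mem_iUnion] at hJ
  obtain ⟨n, hn⟩ := hJ
  refine mem_biUnion (mem_Iic.mpr (le_of_not_gt fun hNn => ?_)) hn
  exact (hN n hNn.le).not_ge ((measure_mono hIJ).trans (le_biSup _ hn))

lemma exists_superset_maximal {G : Set (Set X)} (hG : G ⊆ T.carrier) {I : Set X} (hI : I ∈ G) :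
    ∃ J, I ⊆ J ∧ Maximal (· ∈ G) J := by
  have hfin : {J ∈ G | I ⊆ J}.Finite :=
    (T.finite_setOf_superset (T.pos I (hG hI))).subset fun J hJ => ⟨hG hJ.1, hJ.2⟩
  obtain ⟨J, hIJ, hJ⟩ := hfin.exists_le_maximal ⟨hI, subset_rfl⟩
  exact ⟨J, hIJ, hJ.prop.1, fun K hK hJK => hJ.2 ⟨hK, hIJ.trans hJK⟩ hJK⟩

lemma pairwise_aedisjoint_maximal {G : Set (Set X)} (hG : G ⊆ T.carrier) :
    {J | Maximal (· ∈ G) J}.Pairwise (AEDisjoint μ) := by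
  intro J hJ K hK hJK
  rcases T.subset_or_subset_or_aedisjoint (hG hJ.prop) (hG hK.prop) with h | h | h
  · exact absurd (hJ.eq_of_subset hK.prop h) hJK
  · exact absurd (hK.eq_of_superset hJ.prop h) hJK
  · exact h

lemma exists_mem_of_lt_maxT [IsFiniteMeasure μ] {φ : X → ℝ} {c : ℝ≥0∞} {x : X}
    (h : c < maxT μ T φ x) :
    ∃ I ∈ T.carrier, x ∈ I ∧ c * μ I < ∫⁻ y in I, ENNReal.ofReal |φ y| ∂μ := by
  simp only [maxT, lt_iSup_iff] at h
  obtain ⟨I, hI, hxI, hc⟩ := h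
  exact ⟨I, hI, hxI, (ENNReal.lt_div_iff_mul_lt (Or.inl (T.pos I hI).ne')
    (Or.inl (measure_ne_top μ I))).mp hc⟩

end TreeOn

section

variable {X : Type*} [MeasurableSpace X] {μ : Measure X}

lemma mul_measure_sUnion_le_setLIntegral {M : Set (Set X)} (hM : M.Countable)
    (hmeas : ∀ J ∈ M, NullMeasurableSet J μ) (hd : M.Pairwise (AEDisjoint μ)) {f : X → ℝ≥0∞}
    {c : ℝ≥0∞} (h : ∀ J ∈ M, c * μ J ≤ ∫⁻ x in J, f x ∂μ) :
    c * μ (⋃₀ M) ≤ ∫⁻ x in ⋃₀ M, f x ∂μ := by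
  rw [sUnion_eq_biUnion, lintegral_biUnion₀ hM hmeas hd]
  calc c * μ (⋃ J ∈ M, J) ≤ c * ∑' J : M, μ J := by gcongr; exact measure_biUnion_le μ hM _
    _ = ∑' J : M, c * μ J := ENNReal.tsum_mul_left.symm
    _ ≤ ∑' J : M, ∫⁻ x in J, f x ∂μ := ENNReal.tsum_le_tsum fun J => h J J.2

lemma measure_le_of_mul_measure_le_setLIntegral {p F c : ℝ} {φ : X → ℝ} (hp : 0 < p)
    (hF : 0 ≤ F) (hc : 0 < c) (hnorm : tripleNorm μ p φ ≤ ENNReal.ofReal F) {U : Set X}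
    (hU : MeasurableSet U) (hUtop : μ U ≠ ∞)
    (hcU : ENNReal.ofReal c * μ U ≤ ∫⁻ x in U, ENNReal.ofReal |φ x| ∂μ) :
    μ U ≤ ENNReal.ofReal (F ^ p / c ^ p) := by
  rcases eq_zero_or_pos (μ U) with hU0 | hU0
  · simp [hU0]
  have hnormU : μ U ^ (-1 + 1 / p) * ∫⁻ x in U, ENNReal.ofReal |φ x| ∂μ ≤ ENNReal.ofReal F :=
    le_trans (by rw [tripleNorm]; exact le_iSup₂_of_le U hU (le_iSup_of_le hU0 le_rfl)) hnorm
  have hpow : μ U ^ (-1 + 1 / p) * μ U = μ U ^ (1 / p) := by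
    conv_lhs => arg 2; rw [← ENNReal.rpow_one (μ U)]
    rw [← ENNReal.rpow_add _ _ hU0.ne' hUtop]
    ring_nf
  have hroot : ENNReal.ofReal c * μ U ^ (1 / p) ≤ ENNReal.ofReal F :=
    calc ENNReal.ofReal c * μ U ^ (1 / p) = μ U ^ (-1 + 1 / p) * (ENNReal.ofReal c * μ U) := by
          rw [← hpow]; ring
      _ ≤ ENNReal.ofReal F := (mul_le_mul_right hcU _).trans hnormU
  have hdiv : μ U ^ (1 / p) ≤ ENNReal.ofReal (F / c) := by
    rw [ENNReal.ofReal_div_of_pos hc, ENNReal.le_div_iff_mul_le (Or.inl (by simpa using hc)) (by simp),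
      mul_comm]
    exact hroot
  calc μ U = (μ U ^ (1 / p)) ^ p := by rw [← ENNReal.rpow_mul, one_div_mul_cancel hp.ne',
        ENNReal.rpow_one]
    _ ≤ ENNReal.ofReal (F / c) ^ p := ENNReal.rpow_le_rpow hdiv hp.le
    _ = ENNReal.ofReal (F ^ p / c ^ p) := by
      rw [ENNReal.ofReal_rpow_of_nonneg (div_nonneg hF hc.le) hp.le, Real.div_rpow hF hc.le]

lemma TreeOn.measure_lt_maxT_le [IsFiniteMeasure μ] (T : TreeOn X μ) {p F c : ℝ} {φ : X → ℝ}
    (hp : 0 < p) (hF : 0 ≤ F) (hc : 0 < c) (hnorm : tripleNorm μ p φ ≤ ENNReal.ofReal F) :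
    μ {x | ENNReal.ofReal c < maxT μ T φ x} ≤ ENNReal.ofReal (F ^ p / c ^ p) := by
  set G := {I ∈ T.carrier | ENNReal.ofReal c * μ I < ∫⁻ y in I, ENNReal.ofReal |φ y| ∂μ}
  set M := {J | Maximal (· ∈ G) J}
  have hGT : G ⊆ T.carrier := fun I hI => hI.1
  have hMT : M ⊆ T.carrier := fun J hJ => hGT hJ.prop
  have hMc : M.Countable := T.countable_carrier.mono hMT
  have hcover : {x | ENNReal.ofReal c < maxT μ T φ x} ⊆ ⋃₀ M := by
    intro x hx
    obtain ⟨I, hI, hxI, hcI⟩ := T.exists_mem_of_lt_maxT hx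
    obtain ⟨J, hIJ, hJ⟩ := T.exists_superset_maximal hGT ⟨hI, hcI⟩
    exact ⟨J, hJ, hIJ hxI⟩
  refine (measure_mono hcover).trans (measure_le_of_mul_measure_le_setLIntegral hp hF hc hnorm
    (.sUnion hMc fun J hJ => T.meas J (hMT hJ)) (measure_ne_top μ _) ?_)
  exact mul_measure_sUnion_le_setLIntegral hMc (fun J hJ => (T.meas J (hMT hJ)).nullMeasurableSet)
    (T.pairwise_aedisjoint_maximal hGT) fun J hJ => hJ.prop.2.le

end

theorem stmt8_general {X : Type*} [MeasurableSpace X] (μ : MeasureTheory.Measure X)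
    [IsProbabilityMeasure μ] (T : TreeOn X μ)
    (p : ℝ) (hp : 1 < p) (F : ℝ) (hF : 0 < F)
    (φ : X → ℝ)
    (hnorm : tripleNorm μ p φ ≤ ENNReal.ofReal F)
    (l : ℝ) (hl : 0 < l) :
    μ {x | ENNReal.ofReal l ≤ maxT μ T φ x} ≤ ENNReal.ofReal (F ^ p / l ^ p) := by
  have hbound : ∀ c ∈ Ioo 0 l,
      μ {x | ENNReal.ofReal l ≤ maxT μ T φ x} ≤ ENNReal.ofReal (F ^ p / c ^ p) := fun c hc =>
    (measure_mono fun x hx => ((ENNReal.ofReal_lt_ofReal_iff hl).2 hc.2).trans_le hx).trans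
      (T.measure_lt_maxT_le (zero_lt_one.trans hp) hF.le hc.1 hnorm)
  have hcont : Tendsto (fun c : ℝ => ENNReal.ofReal (F ^ p / c ^ p)) (𝓝[<] l)
      (𝓝 (ENNReal.ofReal (F ^ p / l ^ p))) :=
    ENNReal.tendsto_ofReal <| (continuousAt_const.div (Real.continuousAt_rpow_const l p
      (Or.inl hl.ne')) (Real.rpow_pos_of_pos hl p).ne').tendsto.mono_left nhdsWithin_le_nhds
  exact ge_of_tendsto hcont (eventually_of_mem (Ioo_mem_nhdsLT hl) hbound)

/-- Upper bound in Theorem 3.1: if `|||φ|||_{p,∞} ≤ F` then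
`μ({M_T φ ≥ λ}) ≤ F^p/λ^p` for every `λ > 0`. -/
theorem stmt8 {X : Type*} [MeasurableSpace X] (μ : MeasureTheory.Measure X)
    [IsProbabilityMeasure μ] (hna : Nonatomic μ) (T : TreeOn X μ)
    (p : ℝ) (hp : 1 < p) (F : ℝ) (hF : 0 < F)
    (φ : X → ℝ) (hφm : Measurable φ) (hφ0 : ∀ x, 0 ≤ φ x)
    (hnorm : tripleNorm μ p φ ≤ ENNReal.ofReal F)
    (l : ℝ) (hl : 0 < l) :
    μ {x | ENNReal.ofReal l ≤ maxT μ T φ x} ≤ ENNReal.ofReal (F ^ p / l ^ p) :=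
  stmt8_general μ T p hp F hF φ hnorm l hl
end

section
/- Let p > 1, 0 < f ≤ 1, λ > (1/f)^{1/(p−1)}, and set A = f^{p/(p−1)} − 1/λ^p. Define φ : [0,1] → [0,∞) by φ(t) = (1 − 1/p)(t + 1/λ^p)^{−1/p} for 0 ≤ t < A, φ(t) = 0 for A ≤ t ≤ 1 − 1/λ^p, and φ(t) = λ for 1 − 1/λ^p < t ≤ 1 (note A ≤ 1 − 1/λ^p). Then, with respect to Lebesgue measure on [0,1], ∫_0^1 φ(s) ds = f and |||φ|||_{p,∞} = 1. -/
open MeasureTheory Set Filter ENNReal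

/-!
Put `a = 1 / λ ^ p` and let `ψ` be `a ^ (-1/p) = λ` on `[0, a)` and `(1 - 1/p) t ^ (-1/p)` on
`[a, ∞)`; `ψ` is antitone since `(1 - 1/p) a ^ (-1/p) < λ`. Translating `[0, A)` by `a` and
reflecting `(1 - a, 1]` onto `[0, a)` turns `φ` into `ψ` on `[0, A + a)`, measure-preservingly.
Hence, by the bathtub principle, `∫_E φ ≤ ∫_0^{|E|} ψ`, and `∫_0^M ψ = M ^ (1 - 1/p)` for
`M ≥ a` (because `a · λ = a ^ (1 - 1/p)`), while `∫_0^M ψ = λ M ≤ M ^ (1 - 1/p)` for `M ≤ a`.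
So `|||φ|||_{p,∞} ≤ 1`, with equality for `E = (1 - a, 1]`, and
`∫_0^1 φ = (A + a) ^ (1 - 1/p) = f`.
-/

/-- The bathtub principle for an antitone density on `[0, ∞)`. -/
theorem setLIntegral_le_setLIntegral_Ico_of_antitoneOn {g : ℝ → ℝ≥0∞}
    (hg : AntitoneOn g (Ici 0)) {F : Set ℝ} (hF : MeasurableSet F) (hF0 : F ⊆ Ici 0)
    (hFfin : volume F ≠ ∞) :
    ∫⁻ x in F, g x ≤ ∫⁻ x in Ico 0 (volume F).toReal, g x := by
  set m := (volume F).toReal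
  set I := Ico (0 : ℝ) m
  have hm : 0 ≤ m := ENNReal.toReal_nonneg
  have hI : MeasurableSet I := measurableSet_Ico
  have hvol : volume I = volume F := by
    rw [Real.volume_Ico, sub_zero, ENNReal.ofReal_toReal hFfin]
  have hdiff : volume (F \ I) = volume (I \ F) := by
    have hF' := measure_inter_add_sdiff (μ := volume) F hI
    have hI' := measure_inter_add_sdiff (μ := volume) I hF
    rw [inter_comm, ← hvol, ← hI'] at hF'
    exact (ENNReal.add_right_inj (measure_ne_top_of_subset inter_subset_right
      (hvol ▸ hFfin))).mp hF'
  have hout : ∫⁻ x in F \ I, g x ≤ g m * volume (I \ F) := by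
    rw [← hdiff, ← setLIntegral_const]
    refine setLIntegral_mono' (hF.diff hI) fun x hx => hg hm (hF0 hx.1) ?_
    exact le_of_not_gt fun hxm => hx.2 ⟨hF0 hx.1, hxm⟩
  have hin : g m * volume (I \ F) ≤ ∫⁻ x in I \ F, g x := by
    rw [← setLIntegral_const]
    exact setLIntegral_mono' (hI.diff hF) fun x hx => hg hx.1.1 hm hx.1.2.le
  calc ∫⁻ x in F, g x = (∫⁻ x in F ∩ I, g x) + ∫⁻ x in F \ I, g x :=
        (lintegral_inter_add_sdiff (μ := volume) g F hI).symm
    _ ≤ (∫⁻ x in I ∩ F, g x) + ∫⁻ x in I \ F, g x := by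
        rw [inter_comm]; exact add_le_add le_rfl (hout.trans hin)
    _ = ∫⁻ x in I, g x := lintegral_inter_add_sdiff (μ := volume) g I hF

theorem MeasureTheory.MeasurePreserving.measure_image_emb {α β : Type*} [MeasurableSpace α]
    [MeasurableSpace β] {μa : Measure α} {μb : Measure β} {f : α → β}
    (hf : MeasurePreserving f μa μb) (hfe : MeasurableEmbedding f) (s : Set α) :
    μb (f '' s) = μa s := by
  rw [← hf.measure_preimage_emb hfe, preimage_image_eq _ hfe.injective]

theorem measurableEmbedding_add_const (a : ℝ) : MeasurableEmbedding (· + a : ℝ → ℝ) :=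
  (MeasurableEquiv.addRight a).measurableEmbedding

theorem measurableEmbedding_const_sub (a : ℝ) : MeasurableEmbedding (a - · : ℝ → ℝ) :=
  (MeasurableEquiv.subLeft a).measurableEmbedding

theorem setLIntegral_Ico_mul_rpow_sub_one {q a M : ℝ} (hq : 0 < q) (ha : 0 ≤ a) (hM : a ≤ M) :
    ∫⁻ t in Ico a M, ENNReal.ofReal (q * t ^ (q - 1)) = ENNReal.ofReal (M ^ q - a ^ q) := by
  have hint : IntervalIntegrable (fun t => q * t ^ (q - 1)) volume a M :=
    (intervalIntegral.intervalIntegrable_rpow' (by linarith)).const_mul q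
  rw [setLIntegral_congr Ico_ae_eq_Ioc, ← ofReal_integral_eq_lintegral_ofReal
      ((intervalIntegrable_iff_integrableOn_Ioc_of_le hM).mp hint),
    ← intervalIntegral.integral_of_le hM,
    intervalIntegral.integral_const_mul, integral_rpow (Or.inl (by linarith)), sub_add_cancel,
    mul_div_cancel₀ _ hq.ne']
  filter_upwards [self_mem_ae_restrict measurableSet_Ioc] with t ht
  exact mul_nonneg hq.le (Real.rpow_nonneg (ha.trans ht.1.le) _)

theorem one_sub_one_div_pos {p : ℝ} (hp : 1 < p) : 0 < 1 - 1 / p := by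
  rw [sub_pos, div_lt_one (by linarith)]; exact hp

namespace Extremal

variable {p a A : ℝ}

/-- The decreasing rearrangement of `extremalFunction p a A`. -/
noncomputable def rearrangement (p a t : ℝ) : ℝ :=
  if t < a then a ^ (-(1 / p)) else (1 - 1 / p) * t ^ (-(1 / p))

/-- The function `φ` of the theorem, parametrised by `a = 1 / λ ^ p`, i.e. `λ = a ^ (-1/p)`. -/
noncomputable def extremalFunction (p a A t : ℝ) : ℝ :=
  if t < A then (1 - 1 / p) * (t + a) ^ (-(1 / p))
  else if t ≤ 1 - a then 0 else a ^ (-(1 / p))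

theorem antitone_rearrangement (hp : 1 < p) (ha : 0 < a) : Antitone (rearrangement p a) := by
  have hq := one_sub_one_div_pos hp
  have hexp : -(1 / p) ≤ 0 := neg_nonpos.mpr (by positivity)
  intro s t hst
  unfold rearrangement
  split_ifs with ht hs hs
  · exact le_rfl
  · linarith
  · have := Real.rpow_le_rpow_of_nonpos ha (not_lt.mp ht) hexp
    nlinarith [Real.rpow_nonneg (le_trans ha.le (not_lt.mp ht)) (-(1 / p))]
  · exact mul_le_mul_of_nonneg_left
      (Real.rpow_le_rpow_of_nonpos (ha.trans_le (not_lt.mp hs)) hst hexp) hq.le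

theorem setLIntegral_rearrangement_Ico (hp : 1 < p) (ha : 0 < a) {M : ℝ} (hM : a ≤ M) :
    ∫⁻ t in Ico 0 M, ENNReal.ofReal (rearrangement p a t) =
      ENNReal.ofReal (M ^ (1 - 1 / p)) := by
  have hq := one_sub_one_div_pos hp
  have hconst : ∫⁻ t in Ico 0 a, ENNReal.ofReal (rearrangement p a t) =
      ENNReal.ofReal (a ^ (1 - 1 / p)) := by
    rw [setLIntegral_congr_fun measurableSet_Ico fun t ht => by
        rw [rearrangement, if_pos ht.2], setLIntegral_const, Real.volume_Ico, sub_zero,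
      ← ENNReal.ofReal_mul (Real.rpow_nonneg ha.le _), sub_eq_add_neg, Real.rpow_add ha,
      Real.rpow_one, mul_comm]
  have hprofile : ∫⁻ t in Ico a M, ENNReal.ofReal (rearrangement p a t) =
      ENNReal.ofReal (M ^ (1 - 1 / p) - a ^ (1 - 1 / p)) := by
    rw [setLIntegral_congr_fun measurableSet_Ico fun t ht => by
        rw [rearrangement, if_neg (not_lt.mpr ht.1), show -(1 / p) = 1 - 1 / p - 1 by ring],
      setLIntegral_Ico_mul_rpow_sub_one hq ha.le hM]
  rw [← Ico_union_Ico_eq_Ico ha.le hM, lintegral_union measurableSet_Ico Ico_disjoint_Ico_same,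
    hconst, hprofile, ← ENNReal.ofReal_add (Real.rpow_nonneg ha.le _)
      (sub_nonneg.mpr (Real.rpow_le_rpow ha.le hM hq.le)), add_sub_cancel]

theorem setLIntegral_rearrangement_Ico_le (hp : 1 < p) (ha : 0 < a) {M : ℝ} (hM : 0 ≤ M) :
    ∫⁻ t in Ico 0 M, ENNReal.ofReal (rearrangement p a t) ≤
      ENNReal.ofReal (M ^ (1 - 1 / p)) := by
  rcases le_or_gt a M with haM | hMa
  · exact (setLIntegral_rearrangement_Ico hp ha haM).le
  rw [setLIntegral_congr_fun measurableSet_Ico fun t ht => by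
      rw [rearrangement, if_pos (ht.2.trans hMa)], setLIntegral_const, Real.volume_Ico, sub_zero,
    ← ENNReal.ofReal_mul (Real.rpow_nonneg ha.le _)]
  refine ENNReal.ofReal_le_ofReal ?_
  rcases hM.eq_or_lt with rfl | hM0
  · simpa using Real.rpow_nonneg le_rfl (1 - 1 / p)
  calc a ^ (-(1 / p)) * M ≤ M ^ (-(1 / p)) * M :=
        mul_le_mul_of_nonneg_right
          (Real.rpow_le_rpow_of_nonpos hM0 hMa.le (neg_nonpos.mpr (by positivity))) hM
    _ = M ^ (1 - 1 / p) := by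
        rw [sub_eq_neg_add, Real.rpow_add hM0, Real.rpow_one]

theorem extremalFunction_nonneg (hp : 1 < p) (ha : 0 ≤ a) {x : ℝ} (hx : 0 ≤ x) :
    0 ≤ extremalFunction p a A x := by
  unfold extremalFunction
  split_ifs
  · exact mul_nonneg (one_sub_one_div_pos hp).le (Real.rpow_nonneg (by linarith) _)
  · exact le_rfl
  · exact Real.rpow_nonneg ha _

def transport (a A : ℝ) (S : Set ℝ) : Set ℝ :=
  (· + a) '' (S ∩ Ico 0 A) ∪ (1 - ·) '' (S ∩ Ioc (1 - a) 1)

theorem image_add_const_inter_Ico_subset (S : Set ℝ) :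
    (· + a) '' (S ∩ Ico 0 A) ⊆ Ico a (A + a) := by
  refine (image_mono inter_subset_right).trans ?_
  rw [image_add_const_Ico, zero_add]

theorem image_one_sub_inter_Ioc_subset (S : Set ℝ) :
    (1 - ·) '' (S ∩ Ioc (1 - a) 1) ⊆ Ico 0 a := by
  refine (image_mono inter_subset_right).trans ?_
  rw [image_const_sub_Ioc, sub_self, _root_.sub_sub_cancel]

theorem measurableSet_transport {S : Set ℝ} (hS : MeasurableSet S) :
    MeasurableSet (transport a A S) :=
  ((measurableEmbedding_add_const a).measurableSet_image.mpr (hS.inter measurableSet_Ico)).union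
    ((measurableEmbedding_const_sub 1).measurableSet_image.mpr (hS.inter measurableSet_Ioc))

theorem transport_subset_Ici (ha : 0 ≤ a) (S : Set ℝ) : transport a A S ⊆ Ici 0 :=
  union_subset ((image_add_const_inter_Ico_subset S).trans fun _ ht => ha.trans ht.1)
    ((image_one_sub_inter_Ioc_subset S).trans Ico_subset_Ici_self)

theorem transport_univ (ha : 0 ≤ a) (hA : 0 ≤ A) : transport a A univ = Ico 0 (A + a) := by
  rw [transport, univ_inter, univ_inter, image_add_const_Ico, image_const_sub_Ioc, zero_add,
    sub_self, _root_.sub_sub_cancel, union_comm, Ico_union_Ico_eq_Ico ha (by linarith)]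

theorem volume_transport_le (ha : 0 ≤ a) (hA : 0 ≤ A) (hAa : A ≤ 1 - a) {S : Set ℝ}
    (hS : MeasurableSet S) :
    volume (transport a A S) ≤ volume (S ∩ Icc 0 1) := by
  have hdisj : Disjoint (S ∩ Ico 0 A) (S ∩ Ioc (1 - a) 1) :=
    Set.disjoint_left.mpr fun x hx hx' => by linarith [hx.2.2, hx'.2.1]
  calc volume (transport a A S)
      ≤ volume ((· + a) '' (S ∩ Ico 0 A)) + volume ((1 - ·) '' (S ∩ Ioc (1 - a) 1)) :=
        measure_union_le _ _
    _ = volume (S ∩ Ico 0 A ∪ S ∩ Ioc (1 - a) 1) := by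
        rw [(measurePreserving_add_right volume a).measure_image_emb
            (measurableEmbedding_add_const a),
          (Measure.measurePreserving_sub_left volume 1).measure_image_emb
            (measurableEmbedding_const_sub 1),
          measure_union hdisj (hS.inter measurableSet_Ioc)]
    _ ≤ volume (S ∩ Icc 0 1) := by
        refine measure_mono (union_subset (inter_subset_inter_right _ ?_)
          (inter_subset_inter_right _ ?_))
        · exact Ico_subset_Icc_self.trans (Icc_subset_Icc le_rfl (by linarith))
        · exact Ioc_subset_Icc_self.trans (Icc_subset_Icc (by linarith) le_rfl)

theorem setLIntegral_extremalFunction (ha : 0 ≤ a) (hA : 0 ≤ A) (hAa : A ≤ 1 - a)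
    {S : Set ℝ} (hS : MeasurableSet S) :
    ∫⁻ x in S ∩ Icc 0 1, ENNReal.ofReal (extremalFunction p a A x) =
      ∫⁻ t in transport a A S, ENNReal.ofReal (rearrangement p a t) := by
  have hsplit :
      S ∩ Icc 0 1 = (S ∩ Ico 0 A ∪ S ∩ Icc A (1 - a)) ∪ S ∩ Ioc (1 - a) 1 := by
    rw [← inter_union_distrib_left, ← inter_union_distrib_left, Ico_union_Icc_eq_Icc hA hAa,
      Icc_union_Ioc_eq_Icc (hA.trans hAa) (by linarith)]
  have hdisj₁ : Disjoint (S ∩ Ico 0 A) (S ∩ Icc A (1 - a)) :=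
    Set.disjoint_left.mpr fun x hx hx' => (not_lt.mpr hx'.2.1) hx.2.2
  have hdisj₂ : Disjoint (S ∩ Ico 0 A ∪ S ∩ Icc A (1 - a)) (S ∩ Ioc (1 - a) 1) := by
    refine Set.disjoint_left.mpr fun x hx hx' => ?_
    rcases hx with hx | hx <;> linarith [hx.2.2, hx'.2.1]
  have hshift : ∫⁻ x in S ∩ Ico 0 A, ENNReal.ofReal (extremalFunction p a A x) =
      ∫⁻ t in (· + a) '' (S ∩ Ico 0 A), ENNReal.ofReal (rearrangement p a t) := by
    rw [← (measurePreserving_add_right volume a).setLIntegral_comp_emb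
      (measurableEmbedding_add_const a)]
    refine setLIntegral_congr_fun (hS.inter measurableSet_Ico) fun x hx => ?_
    rw [extremalFunction, rearrangement, if_pos hx.2.2, if_neg (by linarith [hx.2.1])]
  have hzero : ∫⁻ x in S ∩ Icc A (1 - a), ENNReal.ofReal (extremalFunction p a A x) = 0 := by
    rw [setLIntegral_congr_fun (hS.inter measurableSet_Icc) fun x hx => by
      rw [extremalFunction, if_neg (not_lt.mpr hx.2.1), if_pos hx.2.2]]
    simp
  have hreflect : ∫⁻ x in S ∩ Ioc (1 - a) 1, ENNReal.ofReal (extremalFunction p a A x) =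
      ∫⁻ t in (1 - ·) '' (S ∩ Ioc (1 - a) 1), ENNReal.ofReal (rearrangement p a t) := by
    rw [← (Measure.measurePreserving_sub_left volume 1).setLIntegral_comp_emb
      (measurableEmbedding_const_sub 1)]
    refine setLIntegral_congr_fun (hS.inter measurableSet_Ioc) fun x hx => ?_
    rw [extremalFunction, rearrangement, if_neg (by linarith [hx.2.1]),
      if_neg (not_le.mpr hx.2.1), if_pos (by linarith [hx.2.1])]
  rw [hsplit, lintegral_union (hS.inter measurableSet_Ioc) hdisj₂,
    lintegral_union (hS.inter measurableSet_Icc) hdisj₁, hshift, hzero, hreflect, add_zero,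
    transport, lintegral_union
      ((measurableEmbedding_const_sub 1).measurableSet_image.mpr (hS.inter measurableSet_Ioc))
      (Ico_disjoint_Ico_same.symm.mono (image_add_const_inter_Ico_subset S)
        (image_one_sub_inter_Ioc_subset S))]

theorem setLIntegral_extremalFunction_le (hp : 1 < p) (ha : 0 < a) (hA : 0 ≤ A)
    (hAa : A ≤ 1 - a) {S : Set ℝ} (hS : MeasurableSet S) :
    ∫⁻ x in S ∩ Icc 0 1, ENNReal.ofReal (extremalFunction p a A x) ≤
      volume (S ∩ Icc 0 1) ^ (1 - 1 / p) := by
  have hq := one_sub_one_div_pos hp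
  set F := transport a A S
  have hvol : volume F ≤ volume (S ∩ Icc 0 1) := volume_transport_le ha.le hA hAa hS
  have hfin : volume F ≠ ∞ :=
    ne_top_of_le_ne_top (measure_ne_top_of_subset inter_subset_right (by simp)) hvol
  calc ∫⁻ x in S ∩ Icc 0 1, ENNReal.ofReal (extremalFunction p a A x)
      = ∫⁻ t in F, ENNReal.ofReal (rearrangement p a t) :=
        setLIntegral_extremalFunction ha.le hA hAa hS
    _ ≤ ∫⁻ t in Ico 0 (volume F).toReal, ENNReal.ofReal (rearrangement p a t) :=
        setLIntegral_le_setLIntegral_Ico_of_antitoneOn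
          ((ENNReal.ofReal_mono.comp_antitone (antitone_rearrangement hp ha)).antitoneOn _)
          (measurableSet_transport hS) (transport_subset_Ici ha.le S) hfin
    _ ≤ ENNReal.ofReal ((volume F).toReal ^ (1 - 1 / p)) :=
        setLIntegral_rearrangement_Ico_le hp ha ENNReal.toReal_nonneg
    _ = volume F ^ (1 - 1 / p) := by
        rw [← ENNReal.ofReal_rpow_of_nonneg ENNReal.toReal_nonneg hq.le,
          ENNReal.ofReal_toReal hfin]
    _ ≤ volume (S ∩ Icc 0 1) ^ (1 - 1 / p) := ENNReal.rpow_le_rpow hvol hq.le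

theorem setLIntegral_Icc_extremalFunction (hp : 1 < p) (ha : 0 < a) (hA : 0 ≤ A)
    (hAa : A ≤ 1 - a) :
    ∫⁻ x in Icc 0 1, ENNReal.ofReal (extremalFunction p a A x) =
      ENNReal.ofReal ((A + a) ^ (1 - 1 / p)) := by
  rw [← univ_inter (Icc 0 1), setLIntegral_extremalFunction ha.le hA hAa MeasurableSet.univ,
    transport_univ ha.le hA, setLIntegral_rearrangement_Ico hp ha (by linarith)]

theorem lintegral_restrict_Icc_abs_extremalFunction (hp : 1 < p) (ha : 0 ≤ a) {S : Set ℝ}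
    (hS : MeasurableSet S) :
    ∫⁻ x in S, ENNReal.ofReal |extremalFunction p a A x| ∂volume.restrict (Icc 0 1) =
      ∫⁻ x in S ∩ Icc 0 1, ENNReal.ofReal (extremalFunction p a A x) := by
  rw [Measure.restrict_restrict hS]
  exact setLIntegral_congr_fun (hS.inter measurableSet_Icc) fun x hx => by
    rw [abs_of_nonneg (extremalFunction_nonneg hp ha hx.2.1)]

theorem tripleNorm_extremalFunction_le_one (hp : 1 < p) (ha : 0 < a) (hA : 0 ≤ A)
    (hAa : A ≤ 1 - a) :
    tripleNorm (volume.restrict (Icc 0 1)) p (extremalFunction p a A) ≤ 1 := by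
  refine iSup₂_le fun E hE => iSup_le fun hpos => ?_
  rw [lintegral_restrict_Icc_abs_extremalFunction hp ha.le hE, Measure.restrict_apply hE] at *
  have hfin : volume (E ∩ Icc 0 1) ≠ ∞ :=
    measure_ne_top_of_subset inter_subset_right (by simp)
  calc volume (E ∩ Icc 0 1) ^ (-1 + 1 / p) *
        ∫⁻ x in E ∩ Icc 0 1, ENNReal.ofReal (extremalFunction p a A x)
      ≤ volume (E ∩ Icc 0 1) ^ (-1 + 1 / p) * volume (E ∩ Icc 0 1) ^ (1 - 1 / p) :=
        mul_le_mul_right (setLIntegral_extremalFunction_le hp ha hA hAa hE) _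
    _ = 1 := by
        rw [← ENNReal.rpow_add _ _ hpos.ne' hfin, show -1 + 1 / p + (1 - 1 / p) = 0 by ring,
          ENNReal.rpow_zero]

theorem one_le_tripleNorm_extremalFunction (hp : 1 < p) (ha : 0 < a) (hA : 0 ≤ A)
    (hAa : A ≤ 1 - a) :
    1 ≤ tripleNorm (volume.restrict (Icc 0 1)) p (extremalFunction p a A) := by
  have hsub : Ioc (1 - a) 1 ∩ Icc 0 1 = Ioc (1 - a) 1 :=
    inter_eq_left.mpr (Ioc_subset_Icc_self.trans (Icc_subset_Icc (by linarith) le_rfl))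
  have hvol : volume.restrict (Icc 0 1) (Ioc (1 - a) 1) = ENNReal.ofReal a := by
    rw [Measure.restrict_apply measurableSet_Ioc, hsub, Real.volume_Ioc, _root_.sub_sub_cancel]
  have hint : ∫⁻ x in Ioc (1 - a) 1, ENNReal.ofReal |extremalFunction p a A x|
      ∂volume.restrict (Icc 0 1) = ENNReal.ofReal (a ^ (-(1 / p)) * a) := by
    rw [lintegral_restrict_Icc_abs_extremalFunction hp ha.le measurableSet_Ioc, hsub,
      setLIntegral_congr_fun measurableSet_Ioc fun x hx => by
        rw [extremalFunction, if_neg (by linarith [hx.1]), if_neg (not_le.mpr hx.1)],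
      setLIntegral_const, Real.volume_Ioc, _root_.sub_sub_cancel,
      ENNReal.ofReal_mul (Real.rpow_nonneg ha.le _)]
  refine le_iSup₂_of_le (Ioc (1 - a) 1) measurableSet_Ioc
    (le_iSup_of_le (by rw [hvol]; exact ENNReal.ofReal_pos.mpr ha) (le_of_eq ?_))
  rw [hvol, hint, ENNReal.ofReal_rpow_of_pos ha,
    ← ENNReal.ofReal_mul (Real.rpow_nonneg ha.le _), ← Real.rpow_add_one ha.ne',
    ← Real.rpow_add ha, show -1 + 1 / p + (-(1 / p) + 1) = 0 by ring, Real.rpow_zero,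
    ENNReal.ofReal_one]

end Extremal

/-- The explicit extremal function in Theorem 3.1 on `[0,1]` has integral `f`
and `|||φ|||_{p,∞} = 1` (with respect to Lebesgue measure on `[0,1]`). -/
theorem stmt10 (p f l A : ℝ) (hp : 1 < p) (hf : 0 < f) (hf1 : f ≤ 1)
    (hl : (1 / f) ^ (1 / (p - 1)) < l)
    (hA : A = f ^ (p / (p - 1)) - 1 / l ^ p)
    (φ : ℝ → ℝ)
    (hφ : ∀ t, φ t = if t < A then (1 - 1 / p) * (t + 1 / l ^ p) ^ (-(1 / p))
      else if t ≤ 1 - 1 / l ^ p then 0 else l) :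
    (∫⁻ t in Set.Icc (0 : ℝ) 1, ENNReal.ofReal (φ t) = ENNReal.ofReal f) ∧
      tripleNorm (MeasureTheory.volume.restrict (Set.Icc (0 : ℝ) 1)) p φ = 1 := by
  have hp0 : 0 < p := by linarith
  have hp1 : p - 1 ≠ 0 := by linarith
  have hl0 : 0 < l := (Real.rpow_pos_of_pos (by positivity) _).trans hl
  have hal : (1 / l ^ p) ^ (-(1 / p)) = l := by
    rw [one_div, Real.inv_rpow (by positivity), Real.rpow_neg (by positivity), inv_inv, one_div,
      Real.rpow_rpow_inv hl0.le hp0.ne']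
  have hA0 : 0 ≤ A := by
    -- raise `hl` to the power `p`
    have h := Real.rpow_lt_rpow (by positivity) hl hp0
    rw [← Real.rpow_mul (by positivity), one_div_mul_eq_div, Real.div_rpow zero_le_one hf.le,
      Real.one_rpow, one_div_lt (by positivity) (by positivity)] at h
    rw [hA, sub_nonneg]; exact h.le
  have hA1 : A ≤ 1 - 1 / l ^ p := by
    linarith [Real.rpow_le_one hf.le hf1 (div_nonneg hp0.le (by linarith) : 0 ≤ p / (p - 1))]
  obtain rfl : φ = Extremal.extremalFunction p (1 / l ^ p) A := funext fun t => by
    rw [hφ t, Extremal.extremalFunction, hal]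
  refine ⟨?_, le_antisymm
    (Extremal.tripleNorm_extremalFunction_le_one hp (by positivity) hA0 hA1)
    (Extremal.one_le_tripleNorm_extremalFunction hp (by positivity) hA0 hA1)⟩
  rw [Extremal.setLIntegral_Icc_extremalFunction hp (by positivity) hA0 hA1, hA, sub_add_cancel,
    ← Real.rpow_mul hf.le, show p / (p - 1) * (1 - 1 / p) = 1 by field_simp, Real.rpow_one]
end

section
/- Let p > 1, 0 < f ≤ 1, λ > (1/f)^{1/(p−1)}, and set A = f^{p/(p−1)} − 1/λ^p. Define φ(t) = (1 − 1/p)(t + 1/λ^p)^{−1/p} for 0 ≤ t < A and φ(t) = 0 for A ≤ t ≤ 1 − 1/λ^p. Then for every measurable set E ⊆ [0, 1 − 1/λ^p] with |E| > 0, ∫_E φ(s) ds ≤ (|E| + 1/λ^p)^{1−1/p} − (1/λ^p)^{1−1/p}. -/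
open MeasureTheory Set Filter ENNReal

/-!
Since `φ` vanishes beyond `A`, it is dominated on `[0, ∞)` by the nonnegative decreasing
function `ψ t = (1 - 1/p) (t + λ^{-p})^{-1/p}`. For a decreasing function, among all sets of a
given measure `m` the integral is largest on `[0, m]` (bathtub principle: the parts of `E` and
of `[0, m]` outside each other have equal measure and lie on opposite sides of `m`), and
`∫_0^m ψ` is the right-hand side.
-/

theorem setIntegral_le_setIntegral_of_antitoneOn_of_measure_eq {μ : Measure ℝ} {g : ℝ → ℝ}
    {m : ℝ} (hg : AntitoneOn g (Ici 0)) (hm : 0 ≤ m) {A B : Set ℝ}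
    (hA : MeasurableSet A) (hB : MeasurableSet B) (hAm : A ⊆ Ici m) (hBm : B ⊆ Icc 0 m)
    (hAB : μ A = μ B) (hBfin : μ B ≠ ∞)
    (hgA : IntegrableOn g A μ) (hgB : IntegrableOn g B μ) :
    ∫ x in A, g x ∂μ ≤ ∫ x in B, g x ∂μ :=
  calc ∫ x in A, g x ∂μ ≤ ∫ _ in A, g m ∂μ :=
        setIntegral_mono_on hgA (integrableOn_const (hAB ▸ hBfin)) hA
          fun x hx => hg (mem_Ici.2 hm) (hm.trans (hAm hx)) (hAm hx)
    _ = g m * μ.real B := by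
        rw [setIntegral_const, smul_eq_mul, measureReal_def, measureReal_def, hAB, mul_comm]
    _ ≤ ∫ x in B, g x ∂μ :=
        setIntegral_ge_of_const_le_real hB hBfin (fun x hx => hg (hBm hx).1 hm (hBm hx).2) hgB

theorem setIntegral_le_setIntegral_Icc_of_antitoneOn {g : ℝ → ℝ} (hg : AntitoneOn g (Ici 0))
    {E : Set ℝ} (hE : MeasurableSet E) (hE0 : E ⊆ Ici 0) (hEfin : volume E ≠ ∞)
    (hgE : IntegrableOn g E) :
    ∫ x in E, g x ≤ ∫ x in Icc 0 (volume E).toReal, g x := by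
  set m := (volume E).toReal
  have hm : 0 ≤ m := ENNReal.toReal_nonneg
  have hS : volume (Icc 0 m) = volume E := by
    rw [Real.volume_Icc, sub_zero, ENNReal.ofReal_toReal hEfin]
  have hgS : IntegrableOn g (Icc 0 m) :=
    (hg.mono Icc_subset_Ici_self).integrableOn_isCompact isCompact_Icc
  rw [← integral_inter_add_sdiff measurableSet_Icc hgE, ← integral_inter_add_sdiff hE hgS,
    inter_comm]
  refine add_le_add le_rfl (setIntegral_le_setIntegral_of_antitoneOn_of_measure_eq hg hm
    (hE.diff measurableSet_Icc) (measurableSet_Icc.diff hE) ?_ sdiff_subset ?_ ?_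
    (hgE.mono_set sdiff_subset) (hgS.mono_set sdiff_subset))
  · intro x ⟨hxE, hxS⟩
    by_contra hxm
    exact hxS ⟨hE0 hxE, (not_le.1 hxm).le⟩
  · exact measure_sdiff_symm hE.nullMeasurableSet measurableSet_Icc.nullMeasurableSet hS.symm
      (measure_ne_top_of_subset inter_subset_left hEfin)
  · exact measure_ne_top_of_subset sdiff_subset (hS ▸ hEfin)

theorem integral_Icc_add_rpow {r c m : ℝ} (hr : r ≠ -1) (hc : 0 < c) (hm : 0 ≤ m) :
    ∫ t in Icc 0 m, (t + c) ^ r = ((m + c) ^ (r + 1) - c ^ (r + 1)) / (r + 1) := by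
  rw [integral_Icc_eq_integral_Ioc, ← intervalIntegral.integral_of_le hm,
    intervalIntegral.integral_comp_add_right (· ^ r), zero_add]
  refine integral_rpow (Or.inr ⟨hr, fun h0 => ?_⟩)
  rw [uIcc_of_le (by linarith)] at h0
  exact absurd h0.1 (not_le.2 hc)

theorem stmt11_general (p f l A : ℝ) (hp : 1 < p) (hf : 0 < f)
    (hl : (1 / f) ^ (1 / (p - 1)) < l)
    (φ : ℝ → ℝ)
    (hφ : ∀ t, φ t = if t < A then (1 - 1 / p) * (t + 1 / l ^ p) ^ (-(1 / p)) else 0)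
    (E : Set ℝ) (hE : MeasurableSet E) (hEsub : E ⊆ Set.Icc 0 (1 - 1 / l ^ p)) :
    ∫ s in E, φ s ≤
      ((MeasureTheory.volume E).toReal + 1 / l ^ p) ^ (1 - 1 / p) -
        (1 / l ^ p) ^ (1 - 1 / p) := by
  set c := 1 / l ^ p
  have hc : 0 < c :=
    one_div_pos.2 (Real.rpow_pos_of_pos ((Real.rpow_pos_of_pos (by positivity) _).trans hl) p)
  have hp' : 0 < 1 - 1 / p := sub_pos.2 ((div_lt_one (by linarith)).2 hp)
  set ψ : ℝ → ℝ := fun t => (1 - 1 / p) * (t + c) ^ (-(1 / p))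
  have hψ : AntitoneOn ψ (Ici 0) := fun a ha b _ hab =>
    mul_le_mul_of_nonneg_left (Real.rpow_le_rpow_of_nonpos (by linarith [mem_Ici.1 ha])
      (by linarith) (neg_nonpos.2 (by positivity))) hp'.le
  have hE0 : E ⊆ Ici 0 := hEsub.trans Icc_subset_Ici_self
  have hψE : IntegrableOn ψ E :=
    ((hψ.mono Icc_subset_Ici_self).integrableOn_isCompact isCompact_Icc).mono_set hEsub
  have hφψ : φ = (Iio A).indicator ψ := funext fun t => by
    by_cases ht : t < A <;> simp [hφ, ht, ψ, c]
  have hφ_le : ∀ t ∈ E, φ t ≤ ψ t := fun t ht => by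
    rw [hφψ]
    exact indicator_apply_le' (fun _ => le_rfl)
      fun _ => mul_nonneg hp'.le (Real.rpow_nonneg (by linarith [mem_Ici.1 (hE0 ht)]) _)
  calc ∫ s in E, φ s ≤ ∫ s in E, ψ s :=
        setIntegral_mono_on (hφψ ▸ hψE.indicator measurableSet_Iio) hψE hE hφ_le
    _ ≤ ∫ s in Icc 0 (volume E).toReal, ψ s :=
        setIntegral_le_setIntegral_Icc_of_antitoneOn hψ hE hE0
          (measure_ne_top_of_subset hEsub (by simp)) hψE
    _ = ((volume E).toReal + c) ^ (1 - 1 / p) - c ^ (1 - 1 / p) := by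
        rw [integral_const_mul, integral_Icc_add_rpow (by linarith) hc ENNReal.toReal_nonneg,
          neg_add_eq_sub, mul_div_cancel₀ _ hp'.ne']

/-- Key inequality (3.6) in the proof of Theorem 3.1: for every measurable
`E ⊆ [0, 1 - 1/λ^p]` of positive measure,
`∫_E φ ≤ (|E| + 1/λ^p)^{1-1/p} - (1/λ^p)^{1-1/p}`. -/
theorem stmt11 (p f l A : ℝ) (hp : 1 < p) (hf : 0 < f) (hf1 : f ≤ 1)
    (hl : (1 / f) ^ (1 / (p - 1)) < l)
    (hA : A = f ^ (p / (p - 1)) - 1 / l ^ p)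
    (φ : ℝ → ℝ)
    (hφ : ∀ t, φ t = if t < A then (1 - 1 / p) * (t + 1 / l ^ p) ^ (-(1 / p)) else 0)
    (E : Set ℝ) (hE : MeasurableSet E) (hEsub : E ⊆ Set.Icc 0 (1 - 1 / l ^ p))
    (hEpos : 0 < MeasureTheory.volume E) :
    ∫ s in E, φ s ≤
      ((MeasureTheory.volume E).toReal + 1 / l ^ p) ^ (1 - 1 / p) -
        (1 / l ^ p) ^ (1 - 1 / p) :=
  stmt11_general p f l A hp hf hl φ hφ E hE hEsub
end
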